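/- arXiv:2011.00833 — 12 statements merged into one kernel-verified Lean document; each statement's English description precedes it below -/
import Mathlib

section
/- Let R = Z/2Z and let Sq² : R[x₁,…,xₙ] → R[x₁,…,xₙ] be the unique R-derivation satisfying Sq²(xᵢ) = (i+1)xᵢ₊₁ + x₁xᵢ (with x₀ = 1 and xⱼ = 0 for j ∉ [0,n]). Then Sq² ∘ Sq² = 0. -/
open MvPolynomial

/-- `xvar n i` is the variable `xᵢ` in `(ℤ/2)[x₁,…,xₙ]`, with the conventions `x₀ = 1`
and `xⱼ = 0` for `j ∉ [0,n]`. -/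
noncomputable def xvar (n : ℕ) (i : ℕ) : MvPolynomial (Fin n) (ZMod 2) :=
  if h : 1 ≤ i ∧ i ≤ n then X ⟨i - 1, by omega⟩ else if i = 0 then 1 else 0

/-- if `Sq²` is an `ℤ/2`-derivation of `(ℤ/2)[x₁,…,xₙ]` with
`Sq²(xᵢ) = (i+1)·xᵢ₊₁ + x₁·xᵢ` for `1 ≤ i ≤ n`, then `Sq² ∘ Sq² = 0`. -/
theorem stmt0 (n : ℕ)
    (Sq : Derivation (ZMod 2) (MvPolynomial (Fin n) (ZMod 2)) (MvPolynomial (Fin n) (ZMod 2)))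
    (hSq : ∀ i : ℕ, 1 ≤ i → i ≤ n →
      Sq (xvar n i) = ((i + 1 : ℕ) : ZMod 2) • xvar n (i + 1) + xvar n 1 * xvar n i) :
    ∀ p : MvPolynomial (Fin n) (ZMod 2), Sq (Sq p) = 0 := by
  set P := MvPolynomial (Fin n) (ZMod 2)
  have h2 : (2 : P) = 0 := by
    have := CharP.cast_eq_zero P 2
    exact_mod_cast this
  have hs : ∀ (m : ℕ) (p : P), ((m : ZMod 2)) • p = (m : P) * p := by
    intro m p
    rw [Algebra.smul_def, map_natCast]
  -- extend hSq to all i ≥ 1 (both sides vanish when i > n)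
  have hSq' : ∀ i : ℕ, 1 ≤ i →
      Sq (xvar n i) = ((i + 1 : ℕ) : ZMod 2) • xvar n (i + 1) + xvar n 1 * xvar n i := by
    intro i hi
    by_cases h : i ≤ n
    · exact hSq i hi h
    · have h1 : xvar n i = 0 := by
        unfold xvar; rw [dif_neg (by omega), if_neg (by omega)]
      have hx : xvar n (i + 1) = 0 := by
        unfold xvar; rw [dif_neg (by omega), if_neg (by omega)]
      simp [h1, hx]
  -- key computation on variables
  have key' : ∀ i : ℕ, 1 ≤ i → Sq (Sq (xvar n i)) = 0 := by
    intro i hi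
    have hNN : ((i + 1 : ℕ) : P) * ((i + 2 : ℕ) : P) = 0 := by
      rw [← Nat.cast_mul, CharP.cast_eq_zero_iff P 2]
      exact (Nat.even_mul_succ_self (i + 1)).two_dvd
    rw [hSq' i hi, map_add, Derivation.map_smul, Derivation.leibniz,
        hSq' (i + 1) (by omega), hSq' 1 le_rfl, hSq' i hi]
    simp only [hs, smul_eq_mul]
    push_cast
    push_cast at hNN
    ring_nf
    linear_combination xvar n (2 + i) * hNN +
      ((i : P) * xvar n 1 * xvar n (1 + i) + xvar n 1 * xvar n (1 + i) +
       xvar n 1 ^ 2 * xvar n i + xvar n i * xvar n 2) * h2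
  have key : ∀ j : Fin n, Sq (Sq (X j)) = 0 := by
    intro j
    have hx : xvar n (j.val + 1) = X j := by
      unfold xvar
      rw [dif_pos ⟨by omega, by omega⟩]
      simp
    rw [← hx]
    exact key' _ (by omega)
  intro p
  induction p using MvPolynomial.induction_on with
  | C a =>
      have : (C a : P) = algebraMap (ZMod 2) P a := rfl
      rw [this, Derivation.map_algebraMap]
      simp
  | add p q hp hq => rw [map_add, map_add, hp, hq, add_zero]
  | mul_X p j hp =>
      rw [Derivation.leibniz]
      simp only [smul_eq_mul]
      rw [map_add, Derivation.leibniz, Derivation.leibniz]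
      simp only [smul_eq_mul]
      rw [hp, key j]
      linear_combination Sq p * Sq (X j) * h2
end

section
/- Let e₁,…,eₙ ∈ Z/2Z[y₁,…,yₙ] be the elementary symmetric polynomials, and let Sq² be the Z/2Z-derivation on the subring of symmetric polynomials determined by Sq²(eᵢ) = (i+1)eᵢ₊₁ + e₁eᵢ (with e₀ = 1, eⱼ = 0 outside [0,n]). For a partition (a₁ ≥ ⋯ ≥ a_l) with each aᵢ ≤ n, let x_{a₁,…,a_l} = det(e_{aᵢ−i+j})_{1≤i,j≤l} be the corresponding Schur polynomial (in the e-basis). Then Sq²(x_{a₁,…,a_l}) = Σ_{i=1}^{l} (aᵢ−i+1)·x_{a₁,…,aᵢ₋₁, aᵢ+1, aᵢ₊₁,…,a_l} + l·x_{a₁,…,a_l,1}, where coefficients are reduced modulo 2 and any term whose index sequence is not weakly decreasing or has an entry > n is interpreted via the determinant formula. -/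
/-!
Extended by zero, `Sq²(e_m) = (m+1)e_{m+1} + e₁e_m` holds for every integer `m`. Differentiating
the Jacobi–Trudi determinant column by column, the entry `e_{aᵣ-r+c}` contributes
`(aᵣ-r)·e_{aᵣ-r+c+1} + (c+1)·e_{aᵣ-r+c+1} + e₁·e_{aᵣ-r+c}`. The first part only depends on the row
through its coefficient, so the sum over columns regroups as a sum over rows and raises `aᵣ` by one.
In the second part column `c` is replaced by column `c+1`, so only the last column survives, with
coefficient `l`; the third part gives `l·e₁·x_a`. Expanding `x_{a,1}` along its last row
`(0,…,0,1,e₁)` shows that these last two terms add up to `l·x_{a,1}`.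
-/

open MvPolynomial

/-- `eZ n m` is the elementary symmetric polynomial `e_m` in `(ℤ/2)[y₁,…,yₙ]`,
extended to integer indices by `0` for `m < 0` (it already vanishes for `m > n`,
and `e₀ = 1`). -/
noncomputable def eZ (n : ℕ) (m : ℤ) : MvPolynomial (Fin n) (ZMod 2) :=
  if 0 ≤ m then MvPolynomial.esymm (Fin n) (ZMod 2) m.toNat else 0

/-- The Schur polynomial in the `e`-basis (dual Jacobi–Trudi):
`x_{a₁,…,a_l} = det (e_{aᵢ - i + j})` (1-indexed `i, j`). -/
noncomputable def schurE (n l : ℕ) (a : Fin l → ℕ) : MvPolynomial (Fin n) (ZMod 2) :=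
  Matrix.det (Matrix.of fun i j : Fin l => eZ n ((a i : ℤ) - (i : ℤ) + (j : ℤ)))

open Equiv Finset

namespace Derivation

variable {R A : Type*} [CommRing R] [CommRing A] [Algebra R A] (D : Derivation R A A)

theorem map_finset_prod {ι : Type*} [DecidableEq ι] (s : Finset ι) (f : ι → A) :
    D (∏ i ∈ s, f i) = ∑ i ∈ s, (∏ j ∈ s.erase i, f j) * D (f i) := by
  induction s using Finset.induction_on with
  | empty => simp
  | insert a s ha ih =>
    rw [prod_insert ha, D.leibniz, smul_eq_mul, smul_eq_mul, ih, sum_insert ha,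
      erase_insert ha, add_comm, mul_sum]
    congr 1
    refine sum_congr rfl fun i hi => ?_
    rw [← mul_assoc, erase_insert_of_ne (ne_of_mem_of_not_mem hi ha).symm,
      prod_insert fun h => ha (mem_of_mem_erase h)]

end Derivation

namespace Matrix

variable {R A : Type*} [CommRing R] [CommRing A] [Algebra R A]
variable {ι : Type*} [DecidableEq ι] [Fintype ι]

theorem det_updateCol_eq_sum_perm (M : Matrix ι ι A) (c : ι) (u : ι → A) :
    (M.updateCol c u).det
      = ∑ σ : Perm ι, Perm.sign σ • (u (σ c) * ∏ i ∈ univ.erase c, M (σ i) i) := by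
  rw [det_apply]
  refine sum_congr rfl fun σ _ => ?_
  rw [← mul_prod_erase univ _ (mem_univ c), updateCol_self]
  congr 2
  exact prod_congr rfl fun i hi => updateCol_ne (ne_of_mem_erase hi)

theorem det_updateRow_eq_sum_perm (M : Matrix ι ι A) (r : ι) (v : ι → A) :
    (M.updateRow r v).det
      = ∑ σ : Perm ι,
          Perm.sign σ • (v (σ⁻¹ r) * ∏ i ∈ univ.erase (σ⁻¹ r), M (σ i) i) := by
  rw [det_apply]
  refine sum_congr rfl fun σ _ => ?_
  rw [← mul_prod_erase univ _ (mem_univ (σ⁻¹ r))]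
  congr 2
  · simp
  · refine prod_congr rfl fun i hi => congrFun (updateRow_ne ?_) i
    rintro rfl
    simp at hi

theorem sum_det_updateCol_eq_sum_det_updateRow (M W : Matrix ι ι A) :
    ∑ c, (M.updateCol c fun r => W r c).det = ∑ r, (M.updateRow r (W r)).det := by
  simp_rw [det_updateCol_eq_sum_perm, det_updateRow_eq_sum_perm]
  rw [sum_comm, sum_comm (s := (univ : Finset ι))]
  exact sum_congr rfl fun σ _ => Fintype.sum_equiv σ _ _ fun c => by simp

theorem det_updateCol_smul' (M : Matrix ι ι A) (c : ι) (z : R) (u : ι → A) :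
    (M.updateCol c (z • u)).det = z • (M.updateCol c u).det := by
  rw [← algebraMap_smul A z u, det_updateCol_smul, ← Algebra.smul_def]

theorem det_updateRow_smul' (M : Matrix ι ι A) (r : ι) (z : R) (u : ι → A) :
    (M.updateRow r (z • u)).det = z • (M.updateRow r u).det := by
  rw [← algebraMap_smul A z u, det_updateRow_smul, ← Algebra.smul_def]

theorem sum_smul_det_updateCol_succ {R : Type*} [SMulZeroClass R A] {m : ℕ}
    (f : Fin (m + 1) → ℕ → A) (w : Fin (m + 1) → R) :
    ∑ c, w c • ((of fun i j : Fin (m + 1) => f i j).updateCol c fun i => f i (c + 1)).det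
      = w (Fin.last m) •
          ((of fun i j : Fin (m + 1) => f i j).updateCol (Fin.last m)
            fun i => f i (m + 1)).det := by
  rw [Fintype.sum_eq_single (Fin.last m) fun c hc => ?_, Fin.val_last]
  have hc' : (c : ℕ) + 1 < m + 1 := by
    have := Fin.val_lt_last hc
    omega
  have hne : c ≠ ⟨c + 1, hc'⟩ := Fin.ne_of_val_ne (by simp)
  rw [det_zero_of_column_eq hne fun i => ?_, smul_zero]
  rw [updateCol_self, updateCol_ne hne.symm]
  rfl

theorem det_of_last_row_eq_zero_of_lt {m : ℕ} (N : Matrix (Fin (m + 2)) (Fin (m + 2)) A)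
    (f : Fin (m + 1) → ℕ → A) (hN : ∀ i j, N i.castSucc j = f i j)
    (hlast : ∀ j : Fin (m + 2), (j : ℕ) < m → N (Fin.last _) j = 0) :
    N.det = N (Fin.last _) (Fin.last _) * (of fun i j : Fin (m + 1) => f i j).det
      - N (Fin.last _) (Fin.last m).castSucc *
          ((of fun i j : Fin (m + 1) => f i j).updateCol (Fin.last m)
            fun i => f i (m + 1)).det := by
  rw [det_succ_row N (Fin.last _), Fin.sum_univ_castSucc, Fin.sum_univ_castSucc,
    sum_eq_zero fun j _ => by rw [hlast _ (by simp), mul_zero, zero_mul]]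
  have hminor_last : N.submatrix (Fin.last _).succAbove (Fin.last _).succAbove
      = of fun i j : Fin (m + 1) => f i j := by
    ext i j
    simp [hN]
  have hminor_castSucc : N.submatrix (Fin.last _).succAbove (Fin.last m).castSucc.succAbove
      = (of fun i j : Fin (m + 1) => f i j).updateCol (Fin.last m) fun i => f i (m + 1) := by
    ext i j
    induction j using Fin.lastCases with
    | last => simp [hN]
    | cast j =>
      have hj := Fin.castSucc_lt_castSucc_iff.mpr (Fin.castSucc_lt_last j)
      simp [hN, Fin.succAbove_of_castSucc_lt _ _ hj]
  rw [hminor_last, hminor_castSucc, Fin.val_last, Fin.val_castSucc, Fin.val_last,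
    Odd.neg_one_pow ⟨m, by ring⟩, Even.neg_one_pow ⟨m + 1, rfl⟩]
  ring

end Matrix

theorem Derivation.map_det {R A ι : Type*} [CommRing R] [CommRing A] [Algebra R A]
    [DecidableEq ι] [Fintype ι] (D : Derivation R A A) (M : Matrix ι ι A) :
    D M.det = ∑ c, (M.updateCol c fun r => D (M r c)).det := by
  rw [Matrix.det_apply, map_sum]
  simp_rw [Matrix.det_updateCol_eq_sum_perm]
  rw [sum_comm]
  refine sum_congr rfl fun σ _ => ?_
  rw [Units.smul_def, map_zsmul, D.map_finset_prod, smul_sum]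
  simp_rw [Units.smul_def, mul_comm]

section JacobiTrudi

variable {n l : ℕ}

theorem eZ_of_neg {m : ℤ} (h : m < 0) : eZ n m = 0 := if_neg h.not_ge

theorem eZ_zero : eZ n 0 = 1 := by
  simp [eZ, esymm_zero]

theorem eZ_of_lt {m : ℤ} (h : (n : ℤ) < m) : eZ n m = 0 := by
  rw [eZ, if_pos (by omega), esymm, powersetCard_eq_empty.mpr (by simp; omega), sum_empty]

theorem sq_eZ
    (Sq : Derivation (ZMod 2) (MvPolynomial (Fin n) (ZMod 2)) (MvPolynomial (Fin n) (ZMod 2)))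
    (hSq : ∀ i : ℕ, 1 ≤ i → i ≤ n →
      Sq (eZ n (i : ℤ)) = ((i + 1 : ℕ) : ZMod 2) • eZ n ((i : ℤ) + 1) + eZ n 1 * eZ n (i : ℤ))
    (m : ℤ) : Sq (eZ n m) = ((m + 1 : ℤ) : ZMod 2) • eZ n (m + 1) + eZ n 1 * eZ n m := by
  rcases m with (_ | k) | k
  · rw [Int.ofNat_eq_natCast, Nat.cast_zero, eZ_zero, Sq.map_one_eq_zero, zero_add, Int.cast_one,
      one_smul, mul_one, CharTwo.add_self_eq_zero]
  · rw [Int.ofNat_eq_natCast]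
    by_cases hk : k + 1 ≤ n
    · simpa using hSq (k + 1) (by omega) hk
    · rw [eZ_of_lt (by omega), eZ_of_lt (by omega), map_zero, smul_zero, mul_zero, add_zero]
  · rw [eZ_of_neg (Int.negSucc_lt_zero k), map_zero, mul_zero, add_zero]
    rcases k with _ | k
    · simp
    · rw [eZ_of_neg (by omega), smul_zero]

noncomputable def schurEntry (n : ℕ) {l : ℕ} (a : Fin l → ℕ) (i : Fin l) (k : ℕ) :
    MvPolynomial (Fin n) (ZMod 2) :=
  eZ n ((a i : ℤ) - i + k)

noncomputable abbrev schurMatrix (n : ℕ) {l : ℕ} (a : Fin l → ℕ) :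
    Matrix (Fin l) (Fin l) (MvPolynomial (Fin n) (ZMod 2)) :=
  Matrix.of fun i j => schurEntry n a i j

theorem schurE_eq_det (a : Fin l → ℕ) : schurE n l a = (schurMatrix n a).det :=
  rfl

theorem schurE_update_succ (a : Fin l → ℕ) (r : Fin l) :
    schurE n l (Function.update a r (a r + 1))
      = ((schurMatrix n a).updateRow r fun j => schurEntry n a r (j + 1)).det := by
  rw [schurE]
  congr 1
  ext i j
  rcases eq_or_ne i r with rfl | hi
  · simp only [Matrix.of_apply, Function.update_self, Nat.cast_add, Nat.cast_one, schurEntry,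
      Matrix.updateRow_self]
    ring_nf
  · simp [schurEntry, hi]

theorem schurE_snoc_one {k : ℕ} (a : Fin (k + 1) → ℕ) :
    schurE n (k + 2) (Fin.snoc a 1)
      = eZ n 1 * (schurMatrix n a).det
        + ((schurMatrix n a).updateCol (Fin.last k) fun i => schurEntry n a i (k + 1)).det := by
  rw [schurE, Matrix.det_of_last_row_eq_zero_of_lt _ (schurEntry n a)
    (fun i j => by simp [schurEntry]) fun j hj => by simpa using eZ_of_neg (by omega),
    CharTwo.sub_eq_add]
  simp [eZ_zero]

theorem sq_schurEntry
    (Sq : Derivation (ZMod 2) (MvPolynomial (Fin n) (ZMod 2)) (MvPolynomial (Fin n) (ZMod 2)))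
    (hSq : ∀ i : ℕ, 1 ≤ i → i ≤ n →
      Sq (eZ n (i : ℤ)) = ((i + 1 : ℕ) : ZMod 2) • eZ n ((i : ℤ) + 1) + eZ n 1 * eZ n (i : ℤ))
    (a : Fin l → ℕ) (i : Fin l) (k : ℕ) :
    Sq (schurEntry n a i k)
      = (((a i : ℤ) - i : ℤ) : ZMod 2) • schurEntry n a i (k + 1)
        + ((k + 1 : ℕ) : ZMod 2) • schurEntry n a i (k + 1) + eZ n 1 * schurEntry n a i k := by
  simp only [schurEntry]
  rw [sq_eZ Sq hSq, ← add_smul]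
  push_cast
  ring_nf

theorem det_updateCol_sq_schurMatrix
    (Sq : Derivation (ZMod 2) (MvPolynomial (Fin n) (ZMod 2)) (MvPolynomial (Fin n) (ZMod 2)))
    (hSq : ∀ i : ℕ, 1 ≤ i → i ≤ n →
      Sq (eZ n (i : ℤ)) = ((i + 1 : ℕ) : ZMod 2) • eZ n ((i : ℤ) + 1) + eZ n 1 * eZ n (i : ℤ))
    (a : Fin l → ℕ) (c : Fin l) :
    ((schurMatrix n a).updateCol c fun r => Sq (schurMatrix n a r c)).det
      = ((schurMatrix n a).updateCol c
            fun r => (((a r : ℤ) - r : ℤ) : ZMod 2) • schurEntry n a r (c + 1)).det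
        + ((c + 1 : ℕ) : ZMod 2) •
            ((schurMatrix n a).updateCol c fun r => schurEntry n a r (c + 1)).det
        + eZ n 1 * (schurMatrix n a).det := by
  have hentry : (fun r => Sq (schurMatrix n a r c))
      = (fun r => (((a r : ℤ) - r : ℤ) : ZMod 2) • schurEntry n a r (c + 1))
        + ((c + 1 : ℕ) : ZMod 2) • (fun r => schurEntry n a r (c + 1))
        + eZ n 1 • fun r => schurMatrix n a r c :=
    funext fun r => sq_schurEntry Sq hSq a r c
  rw [hentry, Matrix.det_updateCol_add, Matrix.det_updateCol_add, Matrix.det_updateCol_smul',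
    Matrix.det_updateCol_smul, Matrix.updateCol_eq_self]

end JacobiTrudi

theorem stmt1_general (n l : ℕ)
    (Sq : Derivation (ZMod 2) (MvPolynomial (Fin n) (ZMod 2)) (MvPolynomial (Fin n) (ZMod 2)))
    (hSq : ∀ i : ℕ, 1 ≤ i → i ≤ n →
      Sq (eZ n (i : ℤ)) = ((i + 1 : ℕ) : ZMod 2) • eZ n ((i : ℤ) + 1) + eZ n 1 * eZ n (i : ℤ))
    (a : Fin l → ℕ) :
    Sq (schurE n l a) =
      (∑ i : Fin l, (((a i : ℤ) - (i : ℤ) : ℤ) : ZMod 2) •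
          schurE n l (Function.update a i (a i + 1)))
        + (l : ZMod 2) • schurE n (l + 1) (Fin.snoc a 1) := by
  obtain _ | k := l
  · simp [schurE]
  have hrow : ∀ r, ((schurMatrix n a).updateRow r
        fun c => (((a r : ℤ) - r : ℤ) : ZMod 2) • schurEntry n a r (c + 1)).det
      = (((a r : ℤ) - r : ℤ) : ZMod 2) • schurE n (k + 1) (Function.update a r (a r + 1)) :=
    fun r => by
      rw [schurE_update_succ]
      exact Matrix.det_updateRow_smul' _ r (((a r : ℤ) - r : ℤ) : ZMod 2) _
  rw [schurE_eq_det, Sq.map_det, sum_congr rfl fun c _ => det_updateCol_sq_schurMatrix Sq hSq a c,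
    sum_add_distrib, sum_add_distrib, Matrix.sum_det_updateCol_eq_sum_det_updateRow _
      fun r c => (((a r : ℤ) - r : ℤ) : ZMod 2) • schurEntry n a r (c + 1),
    Matrix.sum_smul_det_updateCol_succ, schurE_snoc_one]
  simp only [hrow, Fin.val_last, sum_const, card_univ, Fintype.card_fin,
    ← Nat.cast_smul_eq_nsmul (ZMod 2), smul_add]
  abel

/-- for any `ℤ/2`-derivation `Sq²` with
`Sq²(eᵢ) = (i+1)eᵢ₊₁ + e₁eᵢ` (`1 ≤ i ≤ n`), and any partition `a₁ ≥ ⋯ ≥ a_l`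
with all `aᵢ ≤ n`,
`Sq²(x_{a₁,…,a_l}) = Σᵢ (aᵢ - i + 1)·x_{…,aᵢ+1,…} + l·x_{a₁,…,a_l,1}`. -/
theorem stmt1 (n l : ℕ)
    (Sq : Derivation (ZMod 2) (MvPolynomial (Fin n) (ZMod 2)) (MvPolynomial (Fin n) (ZMod 2)))
    (hSq : ∀ i : ℕ, 1 ≤ i → i ≤ n →
      Sq (eZ n (i : ℤ)) = ((i + 1 : ℕ) : ZMod 2) • eZ n ((i : ℤ) + 1) + eZ n 1 * eZ n (i : ℤ))
    (a : Fin l → ℕ) (hdec : ∀ i j : Fin l, i ≤ j → a j ≤ a i) (hbd : ∀ i, a i ≤ n) :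
    Sq (schurE n l a) =
      (∑ i : Fin l, (((a i : ℤ) - (i : ℤ) : ℤ) : ZMod 2) •
          schurE n l (Function.update a i (a i + 1)))
        + (l : ZMod 2) • schurE n (l + 1) (Fin.snoc a 1) :=
  stmt1_general n l Sq hSq a
end

section
/- Define an (untwisted) checkerboard-colored Young tableau as a Young diagram whose box in row i, column j is black iff i+j is even (first box black). For such a diagram Λ, say Λ is irredundant if no white box can be removed from the end of a row keeping a valid Young diagram, and full if no white box can be added at the end of a row keeping a valid Young diagram (with no size constraints, i.e. untruncated). Then Λ is both irredundant and full if and only if Λ is completely even, i.e. Λ = (2b₁, 2b₁, 2b₂, 2b₂, …, 2b_m, 2b_m) consists of pairs of equal even-length rows. -/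
/-- A Young diagram, encoded by its sequence of row lengths (`Λ i` is the length of
the `(i+1)`-st row): weakly decreasing and eventually zero. -/
def IsYoungDiagram (Λ : ℕ → ℕ) : Prop :=
  (∀ i j : ℕ, i ≤ j → Λ j ≤ Λ i) ∧ ∃ N, ∀ i, N ≤ i → Λ i = 0

/-- Untwisted checkerboard coloring: the box in (1-indexed) row `r`, column `c` is black
iff `r + c` is even, i.e. the box at 0-indexed row `i`, column `Λ i - 1` (the last box of
row `i`) is white iff `i + Λ i` is even.  `Removable Λ i`: the last box of row `i` is
white and deleting it leaves a Young diagram. -/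
def Removable (Λ : ℕ → ℕ) (i : ℕ) : Prop :=
  Λ (i + 1) < Λ i ∧ (i + Λ i) % 2 = 0

/-- `Addable Λ i`: a white box can be added at the end of (0-indexed) row `i`
(possibly a new row), keeping a Young diagram; no size constraints (untruncated). -/
def Addable (Λ : ℕ → ℕ) (i : ℕ) : Prop :=
  (i = 0 ∨ Λ i < Λ (i - 1)) ∧ (i + Λ i) % 2 = 1

def Irredundant (Λ : ℕ → ℕ) : Prop := ∀ i, ¬ Removable Λ i

def Full (Λ : ℕ → ℕ) : Prop := ∀ i, ¬ Addable Λ i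

/-- `Λ` is completely even: all rows have even length and rows come in equal adjacent
pairs, i.e. `Λ = (2b₁, 2b₁, 2b₂, 2b₂, …, 2b_m, 2b_m)`. -/
def CompletelyEven (Λ : ℕ → ℕ) : Prop :=
  (∀ i, Λ i % 2 = 0) ∧ ∀ j, Λ (2 * j) = Λ (2 * j + 1)

/-- an (untruncated, untwisted) checkerboard Young diagram is both
irredundant and full iff it is completely even. -/
theorem stmt6 (Λ : ℕ → ℕ) (hΛ : IsYoungDiagram Λ) :
    (Irredundant Λ ∧ Full Λ) ↔ CompletelyEven Λ := by
  obtain ⟨hmono, -⟩ := hΛ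
  constructor
  · rintro ⟨hirr, hfull⟩
    have key : ∀ j, Λ (2 * j) % 2 = 0 ∧ Λ (2 * j + 1) = Λ (2 * j) := by
      intro j
      induction j with
      | zero =>
        have h0 : Λ 0 % 2 = 0 := by
          by_contra h
          exact hfull 0 ⟨Or.inl rfl, by omega⟩
        have hi := hirr 0
        unfold Removable at hi
        have hle : Λ (0+1) ≤ Λ 0 := hmono _ _ (by omega)
        rw [show 2*0+1 = 0+1 from rfl, show 2*0 = 0 from rfl]
        exact ⟨h0, by omega⟩
      | succ j ih =>
        obtain ⟨he, heq⟩ := ih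
        have e1 : 2 * (j + 1) = 2 * j + 2 := by ring
        rw [show 2*(j+1)+1 = 2*j+3 from by ring, e1]
        have hle1 : Λ (2 * j + 2) ≤ Λ (2 * j + 1) := hmono _ _ (by omega)
        have hle2 : Λ (2 * j + 3) ≤ Λ (2 * j + 2) := hmono _ _ (by omega)
        have h2 : Λ (2 * j + 2) % 2 = 0 := by
          by_contra h
          have hf := hfull (2 * j + 2)
          unfold Addable at hf
          have e2 : 2 * j + 2 - 1 = 2 * j + 1 := rfl
          rw [e2] at hf
          exact hf ⟨Or.inr (by omega), by omega⟩
        have hi := hirr (2 * j + 2)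
        unfold Removable at hi
        rw [show 2 * j + 2 + 1 = 2 * j + 3 from rfl] at hi
        exact ⟨h2, by omega⟩
    refine ⟨?_, fun j => ((key j).2).symm⟩
    intro i
    rcases Nat.even_or_odd' i with ⟨k, hk | hk⟩ <;> subst hk
    · exact (key k).1
    · rw [(key k).2]; exact (key k).1
  · rintro ⟨hev, hpair⟩
    constructor
    · rintro i ⟨hlt, hpar⟩
      have := hev i
      have hi : i % 2 = 0 := by omega
      obtain ⟨k, rfl⟩ : ∃ k, i = 2 * k := ⟨i / 2, by omega⟩
      have := hpair k
      omega
    · rintro i ⟨hor, hpar⟩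
      have := hev i
      have hi : i % 2 = 1 := by omega
      obtain ⟨k, rfl⟩ : ∃ k, i = 2 * k + 1 := ⟨i / 2, by omega⟩
      have := hpair k
      have e2 : 2 * k + 1 - 1 = 2 * k := rfl
      rw [e2] at hor
      rcases hor with h | h <;> omega
end

section
/- Fix integers 0 ≤ k ≤ n with k(n−k) even. For (k,n)-truncated untwisted checkerboard Young diagrams (at most k rows, each row length at most n−k; adding boxes must respect these bounds), a diagram Λ is irredundant and full if and only if it is completely even. -/
/-- A `(k,n)`-truncated Young diagram: at most `k` rows, each of length at most `n - k`. -/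
def IsTruncated (k n : ℕ) (Λ : ℕ → ℕ) : Prop :=
  IsYoungDiagram Λ ∧ (∀ i, k ≤ i → Λ i = 0) ∧ ∀ i, Λ i ≤ n - k

/-- `AddableT k n Λ i`: a white box can be added at the end of row `i` keeping a valid
`(k,n)`-truncated Young diagram. -/
def AddableT (k n : ℕ) (Λ : ℕ → ℕ) (i : ℕ) : Prop :=
  i < k ∧ Λ i < n - k ∧ (i = 0 ∨ Λ i < Λ (i - 1)) ∧ (i + Λ i) % 2 = 1

def FullT (k n : ℕ) (Λ : ℕ → ℕ) : Prop := ∀ i, ¬ AddableT k n Λ i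

/-- If the top row is full of length `n - k` with `n - k` odd and `k` even, an
irredundant full diagram is impossible: all rows up to `k` would be odd, contradicting
parity at the last row. -/
lemma oddCase (k n : ℕ) (Λ : ℕ → ℕ)
    (hmono : ∀ i j : ℕ, i ≤ j → Λ j ≤ Λ i)
    (hrows : ∀ i, k ≤ i → Λ i = 0) (hcols : ∀ i, Λ i ≤ n - k)
    (hirr : Irredundant Λ) (hfull : FullT k n Λ)
    (h0 : Λ 0 = n - k) (hm : (n - k) % 2 = 1) (hk : k % 2 = 0) : False := by
  have hk0 : k ≠ 0 := by
    intro h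
    have := hrows 0 (by omega)
    omega
  have key : ∀ i, i < k → Λ i % 2 = 1 := by
    intro i
    induction i using Nat.strong_induction_on with
    | _ i IH =>
      intro hik
      match i with
      | 0 => omega
      | j + 1 =>
        have hj : Λ j % 2 = 1 := IH j (by omega) (by omega)
        rcases eq_or_lt_of_le (hmono j (j+1) (by omega)) with heq | hlt
        · omega
        · have h1 : ¬ Removable Λ j := hirr j
          rw [Removable] at h1
          have hp1 : (j + Λ j) % 2 = 1 := by
            rcases Nat.mod_two_eq_zero_or_one (j + Λ j) with h | h
            · exact absurd ⟨hlt, h⟩ h1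
            · exact h
          have hlm : Λ (j+1) < n - k := lt_of_lt_of_le hlt (hcols j)
          have hp2 : (j + 1 + Λ (j+1)) % 2 ≠ 1 := by
            intro hc
            exact hfull (j+1) ⟨hik, hlm, Or.inr hlt, hc⟩
          omega
  have hlast : Λ (k-1) % 2 = 1 := key (k-1) (by omega)
  have hzero : Λ k = 0 := hrows k le_rfl
  have hdrop : Λ (k-1+1) < Λ (k-1) := by
    have h : k - 1 + 1 = k := by omega
    rw [h, hzero]; omega
  have h1 : ¬ Removable Λ (k-1) := hirr (k-1)
  rw [Removable] at h1
  have hp : (k - 1 + Λ (k-1)) % 2 ≠ 0 := fun h => h1 ⟨hdrop, h⟩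
  omega

/-- for `k(n-k)` even, a `(k,n)`-truncated untwisted checkerboard Young
diagram is irredundant and full iff it is completely even. -/
theorem stmt7 (k n : ℕ) (hkn : k ≤ n) (hpar : k * (n - k) % 2 = 0)
    (Λ : ℕ → ℕ) (hΛ : IsTruncated k n Λ) :
    (Irredundant Λ ∧ FullT k n Λ) ↔ CompletelyEven Λ := by
  obtain ⟨⟨hmono, hN⟩, hrows, hcols⟩ := hΛ
  constructor
  · rintro ⟨hirr, hfull⟩
    have key : ∀ j, Λ (2*j) % 2 = 0 ∧ Λ (2*j) = Λ (2*j+1) := by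
      intro j
      induction j using Nat.strong_induction_on with
      | _ j IH =>
        by_cases hik : k ≤ 2*j
        · exact ⟨by rw [hrows _ hik], by rw [hrows _ hik, hrows _ (by omega)]⟩
        · push_neg at hik
          have heven : Λ (2*j) % 2 = 0 := by
            rcases Nat.lt_or_ge (Λ (2*j)) (n-k) with hlm | hge
            · by_cases hcor : 2*j = 0 ∨ Λ (2*j) < Λ (2*j-1)
              · have hp : (2*j + Λ (2*j)) % 2 ≠ 1 := fun hc =>
                  hfull (2*j) ⟨hik, hlm, hcor, hc⟩
                omega
              · push_neg at hcor
                obtain ⟨hne, hnlt⟩ := hcor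
                have hj : j ≠ 0 := by omega
                have hprev := IH (j-1) (by omega)
                have h1 : 2*(j-1)+1 = 2*j - 1 := by omega
                have heq : Λ (2*j) = Λ (2*j-1) :=
                  le_antisymm (hmono _ _ (by omega)) hnlt
                have heq2 : Λ (2*(j-1)+1) = Λ (2*j-1) := by rw [h1]
                omega
            · have heqm : Λ (2*j) = n - k := le_antisymm (hcols _) hge
              by_cases hj0 : j = 0
              · subst hj0
                rcases Nat.mod_two_eq_zero_or_one (n-k) with h | h
                · omega
                · have hke : k % 2 = 0 := by
                    have hmm := Nat.mul_mod k (n-k) 2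
                    rw [h] at hmm
                    omega
                  exact absurd (oddCase k n Λ hmono hrows hcols hirr hfull
                    (by simpa using heqm) h hke) not_false
              · have hprev := IH (j-1) (by omega)
                have h1 : 2*(j-1)+1 = 2*j - 1 := by omega
                have hle : Λ (2*j) ≤ Λ (2*j-1) := hmono _ _ (by omega)
                have hub : Λ (2*j-1) ≤ n - k := hcols _
                have heq2 : Λ (2*(j-1)+1) = Λ (2*j-1) := by rw [h1]
                omega
          refine ⟨heven, ?_⟩
          rcases eq_or_lt_of_le (hmono (2*j) (2*j+1) (by omega)) with h | h
          · exact h.symm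
          · exact absurd ⟨h, by omega⟩ (hirr (2*j))
    refine ⟨fun i => ?_, fun j => (key j).2⟩
    rcases Nat.even_or_odd i with ⟨j, hj⟩ | ⟨j, hj⟩ <;> subst hj
    · have := (key j).1; rw [two_mul] at this; exact this
    · have h1 := (key j).1
      have h2 := (key j).2
      omega
  · rintro ⟨hev, hpair⟩
    constructor
    · rintro i ⟨hlt, hparr⟩
      have h2 : i % 2 = 0 := by have := hev i; omega
      obtain ⟨j, rfl⟩ : ∃ j, i = 2*j := ⟨i/2, by omega⟩
      have := hpair j
      omega
    · rintro i ⟨hik, hlm, hcor, hparr⟩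
      have h2 : i % 2 = 1 := by have := hev i; omega
      obtain ⟨j, rfl⟩ : ∃ j, i = 2*j+1 := ⟨i/2, by omega⟩
      rcases hcor with h | h
      · omega
      · have he : 2*j+1-1 = 2*j := by omega
        rw [he] at h
        have := hpair j
        omega
end

section
/- Fix integers 0 ≤ k ≤ n with k(n−k) odd. A (k,n)-truncated untwisted checkerboard Young diagram Λ is irredundant and full if and only if either Λ is completely even, or Λ has first row of length n−k and first column of length k, i.e. Λ = (n−k, 2a₁+1, 2a₁+1, …, 2a_m+1, 2a_m+1), with the k−1 rows after the first having odd lengths coming in adjacent equal pairs. -/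
/-- `Λ = (n-k, 2a₁+1, 2a₁+1, …, 2a_m+1, 2a_m+1)`: first row of length `n-k`
(hence first column of length `k`), and the remaining `k-1` rows have odd lengths
coming in adjacent equal pairs. -/
def HookType (k n : ℕ) (Λ : ℕ → ℕ) : Prop :=
  Λ 0 = n - k ∧ (∀ i, 1 ≤ i → i < k → Λ i % 2 = 1) ∧
    ∀ j, 2 * j + 1 < k → Λ (2 * j + 1) = Λ (2 * j + 2)

/-- for `k(n-k)` odd, a `(k,n)`-truncated untwisted checkerboard Young
diagram is irredundant and full iff it is completely even or of the form
`(n-k, 2a₁+1, 2a₁+1, …, 2a_m+1, 2a_m+1)`. -/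
theorem stmt8 (k n : ℕ) (hkn : k ≤ n) (hpar : k * (n - k) % 2 = 1)
    (Λ : ℕ → ℕ) (hΛ : IsTruncated k n Λ) :
    (Irredundant Λ ∧ FullT k n Λ) ↔ (CompletelyEven Λ ∨ HookType k n Λ) := by
  obtain ⟨⟨hmono, -⟩, hrows, hcols⟩ := hΛ
  have hkpar : k % 2 = 1 ∧ (n - k) % 2 = 1 := by
    have h1 := Nat.mul_mod k (n - k) 2
    rcases Nat.mod_two_eq_zero_or_one k with hk | hk <;>
      rcases Nat.mod_two_eq_zero_or_one (n - k) with hm | hm <;>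
      rw [hk, hm] at h1 <;> omega
  constructor
  · rintro ⟨hirr, hfull⟩
    have hchain : ∀ i, i < k → Λ i % 2 = Λ 0 % 2 := by
      intro i hi
      induction i with
      | zero => rfl
      | succ j ih =>
        have hj : j < k := by omega
        have hle : Λ (j + 1) ≤ Λ j := hmono j (j + 1) (by omega)
        rcases eq_or_lt_of_le hle with he | hl
        · rw [he]; exact ih hj
        · have h1 := hirr j
          have h2 := hfull (j + 1)
          simp only [Removable, AddableT, Nat.add_sub_cancel, not_and, not_or] at h1 h2
          have hlt : Λ (j + 1) < n - k := lt_of_lt_of_le hl (hcols j)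
          have := ih hj
          omega
    by_cases h0 : Λ 0 % 2 = 0
    · left
      have heven : ∀ i, Λ i % 2 = 0 := by
        intro i
        by_cases hi : i < k
        · rw [hchain i hi]; exact h0
        · rw [hrows i (by omega)]
      refine ⟨heven, fun j => ?_⟩
      have h1 := hirr (2 * j)
      simp only [Removable, not_and] at h1
      have hle : Λ (2 * j + 1) ≤ Λ (2 * j) := hmono (2 * j) (2 * j + 1) (by omega)
      have := heven (2 * j)
      omega
    · right
      have h02 : Λ 0 % 2 = 1 := by omega
      have hΛ0 : Λ 0 = n - k := by
        have h2 := hfull 0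
        simp only [AddableT, not_and, not_or] at h2
        have := hcols 0
        have hk1 : 0 < k := by omega
        by_contra hne
        exact h2 hk1 (by omega) (Or.inl trivial) (by omega)
      refine ⟨hΛ0, fun i h1 h2 => by have := hchain i h2; omega, fun j hj => ?_⟩
      have h1 := hirr (2 * j + 1)
      simp only [Removable, not_and] at h1
      rw [show 2 * j + 1 + 1 = 2 * j + 2 from rfl] at h1
      have hle : Λ (2 * j + 2) ≤ Λ (2 * j + 1) := hmono (2 * j + 1) (2 * j + 2) (by omega)
      have := hchain (2 * j + 1) hj
      omega
  · rintro (⟨he, hp⟩ | ⟨h0, hodd, hpair⟩)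
    · constructor
      · rintro i ⟨hlt, hp2⟩
        obtain ⟨j, rfl⟩ : ∃ j, i = 2 * j := ⟨i / 2, by have := he i; omega⟩
        have := hp j
        omega
      · rintro i ⟨hik, hlt, hor, hp2⟩
        obtain ⟨j, rfl⟩ : ∃ j, i = 2 * j + 1 := ⟨i / 2, by have := he i; omega⟩
        have := hp j
        have h3 : 2 * j + 1 - 1 = 2 * j := by omega
        rw [h3] at hor
        omega
    · constructor
      · rintro i ⟨hlt, hp2⟩
        by_cases hik : i < k
        · rcases Nat.eq_zero_or_pos i with rfl | hi1
          · omega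
          · have ho := hodd i hi1 hik
            obtain ⟨j, rfl⟩ : ∃ j, i = 2 * j + 1 := ⟨i / 2, by omega⟩
            rw [show 2 * j + 1 + 1 = 2 * j + 2 from rfl] at hlt
            have := hpair j hik
            omega
        · have := hrows i (by omega)
          have := hrows (i + 1) (by omega)
          omega
      · rintro i ⟨hik, hlt, hor, hp2⟩
        rcases Nat.eq_zero_or_pos i with rfl | hi1
        · omega
        · have ho := hodd i hi1 hik
          obtain ⟨j, rfl⟩ : ∃ j, i = 2 * j + 2 := ⟨(i - 2) / 2, by omega⟩
          have := hpair j (by omega)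
          have h3 : 2 * j + 2 - 1 = 2 * j + 1 := by omega
          rw [h3] at hor
          omega
end

section
/- Fix 0 ≤ k ≤ n with k and n both even. A (k,n)-truncated twisted checkerboard Young diagram Λ (first box white, i.e. box (i,j) black iff i+j odd) is irredundant and full if and only if Λ = (n−k) followed by a completely even diagram, or Λ = (a₁+1,…,aₖ+1) where (a₁,…,aₖ) is completely even with at most k rows (i.e. Λ is a completely even diagram with a full first column of length k added). -/
/-- Twisted checkerboard coloring (box `(r,c)` black iff `r + c` odd, 1-indexed; first
box white): the last box of 0-indexed row `i` is white iff `i + Λ i` is odd. -/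
def RemovableTw (Λ : ℕ → ℕ) (i : ℕ) : Prop :=
  Λ (i + 1) < Λ i ∧ (i + Λ i) % 2 = 1

def AddableTw (k n : ℕ) (Λ : ℕ → ℕ) (i : ℕ) : Prop :=
  i < k ∧ Λ i < n - k ∧ (i = 0 ∨ Λ i < Λ (i - 1)) ∧ (i + Λ i) % 2 = 0

def IrredundantTw (Λ : ℕ → ℕ) : Prop := ∀ i, ¬ RemovableTw Λ i

def FullTw (k n : ℕ) (Λ : ℕ → ℕ) : Prop := ∀ i, ¬ AddableTw k n Λ i

/-- `Λ = σ_{n-k}·T` with `T` completely even: first row of length `n - k`, and the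
remaining rows have even lengths coming in adjacent equal pairs. -/
def TopRowType (k n : ℕ) (Λ : ℕ → ℕ) : Prop :=
  Λ 0 = n - k ∧ (∀ i, 1 ≤ i → Λ i % 2 = 0) ∧ ∀ j, Λ (2 * j + 1) = Λ (2 * j + 2)

/-- `Λ = σ_{1^k}·T` with `T` completely even: a full first column of length `k` added to a
completely even diagram, i.e. the first `k` rows all have odd lengths coming in
adjacent equal pairs. -/
def ColumnType (k : ℕ) (Λ : ℕ → ℕ) : Prop :=
  (∀ i, i < k → Λ i % 2 = 1) ∧ ∀ j, 2 * j + 1 < k → Λ (2 * j) = Λ (2 * j + 1)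

/-- for `k` and `n` both even, a `(k,n)`-truncated twisted checkerboard
Young diagram is irredundant and full iff it is of the form `σ_{n-k}T` or `σ_{1^k}T`
with `T` completely even. -/
theorem stmt9 (k n : ℕ) (hkn : k ≤ n) (hk : k % 2 = 0) (hn : n % 2 = 0)
    (Λ : ℕ → ℕ) (hΛ : IsTruncated k n Λ) :
    (IrredundantTw Λ ∧ FullTw k n Λ) ↔ (TopRowType k n Λ ∨ ColumnType k Λ) := by
  obtain ⟨⟨hdec, -⟩, hzero, hbound⟩ := hΛ
  constructor
  · rintro ⟨hirr, hfull⟩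
    have hirr' : ∀ i, Λ (i + 1) < Λ i → (i + Λ i) % 2 = 0 := by
      intro i h
      by_contra hc
      exact hirr i ⟨h, by omega⟩
    have hfull' : ∀ i, i < k → Λ i < n - k → (i = 0 ∨ Λ i < Λ (i - 1)) →
        (i + Λ i) % 2 = 1 := by
      intro i h1 h2 h3
      by_contra hc
      exact hfull i ⟨h1, h2, h3, by omega⟩
    have pairlem : ∀ m, (m + Λ m) % 2 = 1 → Λ (m + 1) = Λ m := by
      intro m hp
      have hle := hdec m (m + 1) (by omega)
      by_contra hne
      have := hirr' m (by omega)
      omega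
    rcases eq_or_lt_of_le (hbound 0) with h0 | h0
    · -- top-row type
      left
      have h0e : Λ 0 % 2 = 0 := by omega
      have oddstep : ∀ m, m % 2 = 0 → Λ m % 2 = 0 → Λ (m + 1) % 2 = 0 := by
        intro m hm hme
        rcases eq_or_lt_of_le (hdec m (m + 1) (by omega)) with he | hlt
        · omega
        · by_cases hkm : m + 1 < k
          · have hd0 := hdec 0 m (Nat.zero_le _)
            have := hfull' (m + 1) hkm (by omega) (Or.inr (by simpa using hlt))
            omega
          · have := hzero (m + 1) (by omega); omega
      have key : ∀ j, Λ (2 * j + 1) % 2 = 0 ∧ Λ (2 * j + 2) = Λ (2 * j + 1) := by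
        intro j
        induction j with
        | zero =>
          have h1 : Λ 1 % 2 = 0 := oddstep 0 rfl h0e
          have h2 := pairlem 1 (by omega)
          rw [show 2 * 0 + 1 = 1 by omega, show 2 * 0 + 2 = 1 + 1 by omega]
          exact ⟨h1, h2⟩
        | succ j ih =>
          obtain ⟨he, hp⟩ := ih
          have h2 : Λ (2 * j + 2) % 2 = 0 := by omega
          have h3 : Λ (2 * j + 2 + 1) % 2 = 0 := oddstep (2 * j + 2) (by omega) h2
          have h4 := pairlem (2 * j + 2 + 1) (by omega)
          rw [show 2 * (j + 1) + 1 = 2 * j + 2 + 1 by omega,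
            show 2 * (j + 1) + 2 = 2 * j + 2 + 1 + 1 by omega]
          exact ⟨h3, h4⟩
      refine ⟨h0, ?_, fun j => ((key j).2).symm⟩
      intro i hi
      obtain ⟨j, hj⟩ : ∃ j, i = 2 * j + 1 ∨ i = 2 * j + 2 := ⟨(i - 1) / 2, by omega⟩
      rcases hj with rfl | rfl
      · exact (key j).1
      · rw [(key j).2]; exact (key j).1
    · -- column type
      right
      by_cases hk0 : k = 0
      · exact ⟨fun i h => absurd h (by omega), fun j h => absurd h (by omega)⟩
      have hΛ0 : Λ 0 % 2 = 1 := by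
        have := hfull' 0 (by omega) h0 (Or.inl rfl); omega
      have oddstep : ∀ m, m % 2 = 1 → Λ m % 2 = 1 → m + 1 < k → Λ (m + 1) % 2 = 1 := by
        intro m hm hme hmk
        rcases eq_or_lt_of_le (hdec m (m + 1) (by omega)) with he | hlt
        · omega
        · have hd0 := hdec 0 m (Nat.zero_le _)
          have := hfull' (m + 1) hmk (by omega) (Or.inr (by simpa using hlt))
          omega
      have key : ∀ j, 2 * j < k → Λ (2 * j) % 2 = 1 ∧ Λ (2 * j + 1) = Λ (2 * j) := by
        intro j
        induction j with
        | zero =>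
          intro _
          have h1 : Λ (2 * 0) % 2 = 1 := by rw [show 2 * 0 = 0 by omega]; exact hΛ0
          exact ⟨h1, pairlem (2 * 0) (by omega)⟩
        | succ j ih =>
          intro h
          obtain ⟨he, hp⟩ := ih (by omega)
          have h1 : Λ (2 * j + 1) % 2 = 1 := by omega
          have h2 : Λ (2 * j + 1 + 1) % 2 = 1 := oddstep (2 * j + 1) (by omega) h1 (by omega)
          have h2' : Λ (2 * (j + 1)) % 2 = 1 := by
            rw [show 2 * (j + 1) = 2 * j + 1 + 1 by omega]; exact h2
          exact ⟨h2', pairlem (2 * (j + 1)) (by omega)⟩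
      constructor
      · intro i hik
        obtain ⟨j, hj⟩ : ∃ j, i = 2 * j ∨ i = 2 * j + 1 := ⟨i / 2, by omega⟩
        rcases hj with rfl | rfl
        · exact (key j hik).1
        · obtain ⟨he, hp⟩ := key j (by omega)
          omega
      · intro j hj
        exact ((key j (by omega)).2).symm
  · rintro (⟨h0, heven, hpair⟩ | ⟨hodd, hpair⟩)
    · constructor
      · rintro i ⟨hdrop, hpar⟩
        obtain ⟨j, hj⟩ : ∃ j, i = 0 ∨ i = 2 * j + 1 ∨ i = 2 * j + 2 :=
          ⟨(i - 1) / 2, by omega⟩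
        rcases hj with rfl | rfl | rfl
        · omega
        · rw [show 2 * j + 1 + 1 = 2 * j + 2 by omega] at hdrop
          have := hpair j
          omega
        · have := heven (2 * j + 2) (by omega)
          omega
      · rintro i ⟨hik, hlt, hprev, hpar⟩
        obtain ⟨j, hj⟩ : ∃ j, i = 0 ∨ i = 2 * j + 1 ∨ i = 2 * j + 2 :=
          ⟨(i - 1) / 2, by omega⟩
        rcases hj with rfl | rfl | rfl
        · omega
        · have := heven (2 * j + 1) (by omega)
          omega
        · rcases hprev with h | h
          · omega
          · rw [show 2 * j + 2 - 1 = 2 * j + 1 by omega] at h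
            have := hpair j
            omega
    · constructor
      · rintro i ⟨hdrop, hpar⟩
        by_cases hik : i < k
        · have ho := hodd i hik
          obtain ⟨j, rfl⟩ : ∃ j, i = 2 * j := ⟨i / 2, by omega⟩
          have hjk : 2 * j + 1 < k := by omega
          have := hpair j hjk
          omega
        · have h1 := hzero i (by omega)
          have h2 := hzero (i + 1) (by omega)
          omega
      · rintro i ⟨hik, hlt, hprev, hpar⟩
        have ho := hodd i hik
        obtain ⟨j, rfl⟩ : ∃ j, i = 2 * j + 1 := ⟨i / 2, by omega⟩
        rcases hprev with h | h
        · omega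
        · rw [show 2 * j + 1 - 1 = 2 * j by omega] at h
          have := hpair j hik
          omega
end

section
/- Fix 0 ≤ k ≤ n with k odd and n even. Then no (k,n)-truncated twisted checkerboard Young diagram is simultaneously irredundant and full. -/
/-- for `k` odd and `n` even, no `(k,n)`-truncated twisted checkerboard
Young diagram is simultaneously irredundant and full. -/
theorem stmt10 (k n : ℕ) (hkn : k ≤ n) (hk : k % 2 = 1) (hn : n % 2 = 0)
    (Λ : ℕ → ℕ) (hΛ : IsTruncated k n Λ) :
    ¬ (IrredundantTw Λ ∧ FullTw k n Λ) := by
  rintro ⟨hirr, hfull⟩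
  obtain ⟨⟨hmono, -⟩, hrows, hcols⟩ := hΛ
  have hnk : (n - k) % 2 = 1 := by omega
  -- every row below k has odd length
  have key : ∀ i, i < k → Λ i % 2 = 1 := by
    intro i
    induction i with
    | zero =>
      intro h0k
      have hc := hcols 0
      have hf := hfull 0
      unfold AddableTw at hf
      push_neg at hf
      rcases eq_or_lt_of_le hc with h | h
      · omega
      · have := hf h0k h (Or.inl rfl)
        omega
    | succ i ih =>
      intro hik
      have hΛi := ih (by omega)
      have hle : Λ (i + 1) ≤ Λ i := hmono i (i + 1) (by omega)
      rcases Nat.even_or_odd i with he | ho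
      · -- i even, row i ends in a white box: no drop allowed
        have hi2 : i % 2 = 0 := Nat.even_iff.mp he
        have hr := hirr i
        unfold RemovableTw at hr
        push_neg at hr
        omega
      · -- i odd
        have hi2 : i % 2 = 1 := Nat.odd_iff.mp ho
        by_cases hdrop : Λ (i + 1) < Λ i
        · have hf := hfull (i + 1)
          unfold AddableTw at hf
          push_neg at hf
          simp only [Nat.add_sub_cancel] at hf
          have hlt : Λ (i + 1) < n - k := lt_of_lt_of_le hdrop (hcols i)
          have := hf hik hlt (Or.inr hdrop)
          omega
        · omega
  -- contradiction at row k - 1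
  have h1 := key (k - 1) (by omega)
  have hr := hirr (k - 1)
  unfold RemovableTw at hr
  push_neg at hr
  have hz : Λ (k - 1 + 1) = 0 := hrows _ (by omega)
  omega
end

section
/- Let V be the Z/2Z-vector space with basis the set of (k,n)-truncated checkerboard Young diagrams (twisted or untwisted, fixed choice), and define the linear map Sq² : V → V by Sq²(Λ) = Σ_{Λ' ∈ A(Λ)} Λ', where A(Λ) is the set of diagrams obtained from Λ by adding one white box. Then Sq² ∘ Sq² = 0, and moreover Ker(Sq²) = Im(Sq²) ⊕ N, where N is the subspace spanned by the diagrams that are both irredundant and full. -/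
attribute [local instance] Classical.propDecidable

/-- Checkerboard coloring (`tw = false`: untwisted, box `(r,c)` black iff `r + c` even;
`tw = true`: twisted): the last box of 0-indexed row `i` is white iff `i + Λ i`
is even (untwisted) resp. odd (twisted). -/
def RemovableCB (tw : Bool) (Λ : ℕ → ℕ) (i : ℕ) : Prop :=
  Λ (i + 1) < Λ i ∧ (i + Λ i) % 2 = (if tw then 1 else 0)

/-- A white box may be added at the end of row `i` keeping a valid `(k,n)`-truncated
diagram. -/
def AddableCB (tw : Bool) (k n : ℕ) (Λ : ℕ → ℕ) (i : ℕ) : Prop :=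
  i < k ∧ Λ i < n - k ∧ (i = 0 ∨ Λ i < Λ (i - 1)) ∧ (i + Λ i) % 2 = (if tw then 0 else 1)

def IrredundantCB (tw : Bool) (Λ : ℕ → ℕ) : Prop := ∀ i, ¬ RemovableCB tw Λ i

def FullCB (tw : Bool) (k n : ℕ) (Λ : ℕ → ℕ) : Prop := ∀ i, ¬ AddableCB tw k n Λ i

/-- Adding one box at the end of row `i`. -/
def addOne (Λ : ℕ → ℕ) (i : ℕ) : ℕ → ℕ := Function.update Λ i (Λ i + 1)

/-- Extension of the basis-indexing function to arbitrary `ℕ → ℕ` (value `0` off the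
set of diagrams). -/
noncomputable def extB (k n : ℕ) {V : Type*} [AddCommGroup V] [Module (ZMod 2) V]
    (B : Module.Basis {Λ : ℕ → ℕ // IsTruncated k n Λ} (ZMod 2) V) (f : ℕ → ℕ) : V :=
  if h : IsTruncated k n f then B ⟨f, h⟩ else 0

/-!
Call a row bad if a white box can be added or removed at its end; the irredundant full
diagrams are exactly those without bad rows. Adding a white box never changes the bad row of
largest index `i₀`, so removing the white box at the end of row `i₀` (when there is one) is a
contracting homotopy `H`: `Sq² H + H Sq² + P = id`, where `P` is the projection onto the span
`N` of the irredundant full diagrams, and `P Sq² = 0` since a diagram just given a white box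
is redundant. Hence `ker Sq² = im Sq² + N` and `im Sq² ∩ N = 0`. Finally `Sq² ∘ Sq² = 0`
because white boxes in two different rows can be added in either order, while no row takes
two white boxes in succession.
-/

theorem Finset.sum_sum_eq_zero_of_symm {ι G : Type*} [AddCommGroup G] [Module (ZMod 2) G]
    (s : Finset ι) (g : ι → ι → G) (hsymm : ∀ i j, g i j = g j i)
    (hdiag : ∀ i, g i i = 0) :
    ∑ i ∈ s, ∑ j ∈ s, g i j = 0 := by
  rw [← Finset.sum_product']
  refine Finset.sum_involution (fun p _ => p.swap) (fun p _ => ?_) (fun p _ hp hswap => ?_)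
    (fun p hp => Finset.mem_product.mpr (Finset.mem_product.mp hp).symm) (fun p _ => p.swap_swap)
  · rw [Prod.fst_swap, Prod.snd_swap, hsymm p.2, ZModModule.add_self]
  · obtain ⟨i, j⟩ := p
    obtain rfl : j = i := congrArg Prod.fst hswap
    exact hp (hdiag j)

section Homotopy

variable {R M : Type*} [Semiring R] [AddCommMonoid M] [Module R M]
  {d h p : M →ₗ[R] M} {N : Submodule R M}

theorem LinearMap.ker_eq_range_sup_of_homotopy (hdd : d ∘ₗ d = 0)
    (hid : d ∘ₗ h + h ∘ₗ d + p = LinearMap.id) (hp : LinearMap.range p ≤ N)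
    (hN : N ≤ LinearMap.ker d) :
    LinearMap.ker d = LinearMap.range d ⊔ N := by
  refine le_antisymm (fun v hv => ?_) (sup_le (LinearMap.range_le_ker_iff.mpr hdd) hN)
  have hv' : d (h v) + p v = v := by
    simpa [LinearMap.mem_ker.mp hv] using LinearMap.congr_fun hid v
  rw [← hv']
  exact Submodule.add_mem_sup (LinearMap.mem_range_self d _) (hp (LinearMap.mem_range_self p v))

theorem LinearMap.disjoint_range_of_comp_eq_zero (hpd : p ∘ₗ d = 0)
    (hpN : ∀ v ∈ N, p v = v) : Disjoint (LinearMap.range d) N := by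
  rw [Submodule.disjoint_def]
  rintro _ ⟨w, rfl⟩ hN
  rw [← hpN _ hN]
  exact LinearMap.congr_fun hpd w

end Homotopy

def removeOne (Λ : ℕ → ℕ) (i : ℕ) : ℕ → ℕ := Function.update Λ i (Λ i - 1)

def BadCB (tw : Bool) (k n : ℕ) (Λ : ℕ → ℕ) (i : ℕ) : Prop :=
  AddableCB tw k n Λ i ∨ RemovableCB tw Λ i

/-- The bad row of largest index, `0` if there is none. -/
noncomputable def maxBad (tw : Bool) (k n : ℕ) (Λ : ℕ → ℕ) : ℕ :=
  Nat.findGreatest (BadCB tw k n Λ) k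

section Combinatorics

variable {tw : Bool} {k n : ℕ} {Λ : ℕ → ℕ} {i j : ℕ}

theorem addOne_apply : addOne Λ i j = if j = i then Λ i + 1 else Λ j :=
  Function.update_apply _ _ _ _

theorem addOne_self : addOne Λ i i = Λ i + 1 := Function.update_self _ _ _

theorem addOne_of_ne (h : j ≠ i) : addOne Λ i j = Λ j := Function.update_of_ne h _ _

theorem removeOne_apply : removeOne Λ i j = if j = i then Λ i - 1 else Λ j :=
  Function.update_apply _ _ _ _

theorem removeOne_self : removeOne Λ i i = Λ i - 1 := Function.update_self _ _ _

theorem removeOne_of_ne (h : j ≠ i) : removeOne Λ i j = Λ j := Function.update_of_ne h _ _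

theorem removeOne_addOne : removeOne (addOne Λ i) i = Λ := by
  simp [removeOne, addOne]

theorem addOne_removeOne (h : 1 ≤ Λ i) : addOne (removeOne Λ i) i = Λ := by
  funext x
  rw [addOne_apply, removeOne_self]
  split_ifs with hx
  · rw [hx]; omega
  · exact removeOne_of_ne hx

theorem addOne_comm (hij : i ≠ j) : addOne (addOne Λ i) j = addOne (addOne Λ j) i := by
  funext x
  simp only [addOne_apply]
  split_ifs <;> omega

theorem removeOne_addOne_comm (hij : j ≠ i) :
    removeOne (addOne Λ j) i = addOne (removeOne Λ i) j := by
  funext x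
  simp only [removeOne_apply, addOne_apply]
  split_ifs <;> omega

/- `(i + Λ i) % 2 = if tw then 0 else 1` says that the box after the end of row `i` is white,
`(i + Λ i) % 2 = if tw then 1 else 0` that the last box of row `i` is white. -/
theorem addParity_iff (x : ℕ) :
    x % 2 = (if tw then 0 else 1) ↔ ¬ x % 2 = (if tw then 1 else 0) := by
  cases tw <;> simp only [Bool.false_eq_true, if_true, if_false] <;> omega

theorem addParity_succ_iff (x : ℕ) :
    (x + 1) % 2 = (if tw then 0 else 1) ↔ x % 2 = (if tw then 1 else 0) := by
  cases tw <;> simp only [Bool.false_eq_true, if_true, if_false] <;> omega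

theorem removeParity_succ_iff (x : ℕ) :
    (x + 1) % 2 = (if tw then 1 else 0) ↔ x % 2 = (if tw then 0 else 1) := by
  cases tw <;> simp only [Bool.false_eq_true, if_true, if_false] <;> omega

theorem IsTruncated.antitone (h : IsTruncated k n Λ) (hij : i ≤ j) : Λ j ≤ Λ i := h.1.1 _ _ hij

theorem RemovableCB.not_addableCB (hr : RemovableCB tw Λ i) : ¬ AddableCB tw k n Λ i :=
  fun ha => (addParity_iff _).mp ha.2.2.2 hr.2

theorem AddableCB.not_addableCB_addOne (ha : AddableCB tw k n Λ i) :
    ¬ AddableCB tw k n (addOne Λ i) i := by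
  intro h
  have hpar := h.2.2.2
  rw [addOne_self, ← add_assoc, addParity_succ_iff] at hpar
  exact (addParity_iff _).mp ha.2.2.2 hpar

theorem AddableCB.isTruncated_addOne (ha : AddableCB tw k n Λ i) (h : IsTruncated k n Λ) :
    IsTruncated k n (addOne Λ i) := by
  obtain ⟨hik, hlt, hprev, -⟩ := ha
  have hvanish : ∀ j, k ≤ j → addOne Λ i j = 0 := fun j hj => by
    rw [addOne_of_ne (by omega)]
    exact h.2.1 j hj
  refine ⟨⟨fun a b hab => ?_, ⟨k, hvanish⟩⟩, hvanish, fun j => ?_⟩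
  · simp only [addOne_apply]
    split_ifs with hb ha
    · rfl
    · have := hprev.resolve_left (by omega)
      have := h.antitone (show a ≤ i - 1 by omega)
      omega
    · have := h.antitone (show i ≤ b by omega)
      omega
    · exact h.antitone hab
  · rw [addOne_apply]
    split_ifs
    · omega
    · exact h.2.2 j

theorem RemovableCB.isTruncated_removeOne (hr : RemovableCB tw Λ i) (h : IsTruncated k n Λ) :
    IsTruncated k n (removeOne Λ i) := by
  have hlt := hr.1
  have hvanish : ∀ j, k ≤ j → removeOne Λ i j = 0 := fun j hj => by
    rw [removeOne_apply]
    split_ifs with hx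
    · subst hx; have := h.2.1 j hj; omega
    · exact h.2.1 j hj
  refine ⟨⟨fun a b hab => ?_, ⟨k, hvanish⟩⟩, hvanish, fun j => ?_⟩
  · simp only [removeOne_apply]
    split_ifs with hb ha
    · rfl
    · have := h.antitone (show a ≤ i by omega)
      omega
    · have := h.antitone (show i + 1 ≤ b by omega)
      omega
    · exact h.antitone hab
  · rw [removeOne_apply]
    split_ifs
    · have := h.2.2 i; omega
    · exact h.2.2 j

theorem IsTruncated.lt_of_badCB (h : IsTruncated k n Λ) (hb : BadCB tw k n Λ i) : i < k := by
  rcases hb with ha | hr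
  · exact ha.1
  · by_contra hik
    have := h.2.1 i (by omega)
    have := hr.1
    omega

theorem IsTruncated.removableCB_addOne_self (h : IsTruncated k n Λ)
    (ha : AddableCB tw k n Λ i) : RemovableCB tw (addOne Λ i) i := by
  have := h.antitone (show i ≤ i + 1 by omega)
  refine ⟨?_, ?_⟩
  · rw [addOne_of_ne (by omega), addOne_self]; omega
  · rw [addOne_self, ← add_assoc, removeParity_succ_iff]
    exact ha.2.2.2

theorem RemovableCB.addableCB_removeOne (hr : RemovableCB tw Λ i) (h : IsTruncated k n Λ) :
    AddableCB tw k n (removeOne Λ i) i := by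
  have hlt := hr.1
  refine ⟨h.lt_of_badCB (Or.inr hr), ?_, ?_, ?_⟩
  · rw [removeOne_self]; have := h.2.2 i; omega
  · rcases Nat.eq_zero_or_pos i with hi | hi
    · exact Or.inl hi
    · have := h.antitone (show i - 1 ≤ i by omega)
      rw [removeOne_self, removeOne_of_ne (by omega)]
      omega
  · rw [removeOne_self, ← removeParity_succ_iff, show i + (Λ i - 1) + 1 = i + Λ i by omega]
    exact hr.2

theorem AddableCB.addableCB_addOne_iff (ha : AddableCB tw k n Λ i) (hji : j ≠ i) :
    AddableCB tw k n (addOne Λ i) j ↔ AddableCB tw k n Λ j := by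
  unfold AddableCB
  rw [addOne_of_ne hji]
  rcases eq_or_ne j (i + 1) with rfl | hj
  · rw [Nat.add_sub_cancel, addOne_self]
    have hpar := (addParity_iff _).mp ha.2.2.2
    refine and_congr_right fun _ => and_congr_right fun _ => and_congr_left fun hj => ?_
    -- if rows `i` and `i + 1` had equal length, the boxes after their ends would have
    -- opposite colours
    have : Λ (i + 1) ≠ Λ i := fun he =>
      hpar (by rwa [he, ← add_right_comm, addParity_succ_iff] at hj)
    omega
  · rw [addOne_of_ne (show j - 1 ≠ i by omega)]

theorem AddableCB.removableCB_addOne_iff (ha : AddableCB tw k n Λ i) (hji : j ≠ i) :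
    RemovableCB tw (addOne Λ i) j ↔ RemovableCB tw Λ j := by
  unfold RemovableCB
  rw [addOne_of_ne hji]
  rcases eq_or_ne (j + 1) i with rfl | hj
  · rw [addOne_self]
    have hpar := (addParity_iff _).mp ha.2.2.2
    refine and_congr_left fun hj => ?_
    -- the last box of row `j` and the box after the end of row `j + 1` cannot both be white
    have : Λ j ≠ Λ (j + 1) + 1 := fun he =>
      hpar (by rwa [he, ← add_assoc, add_right_comm] at hj)
    omega
  · rw [addOne_of_ne hj]

theorem AddableCB.addableCB_addOne_comm (ha : AddableCB tw k n Λ i)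
    (hb : AddableCB tw k n (addOne Λ i) j) :
    AddableCB tw k n Λ j ∧ AddableCB tw k n (addOne Λ j) i := by
  have hji : j ≠ i := fun h => ha.not_addableCB_addOne (h ▸ hb)
  have hj := (ha.addableCB_addOne_iff hji).mp hb
  exact ⟨hj, (hj.addableCB_addOne_iff hji.symm).mpr ha⟩

theorem AddableCB.badCB_addOne_iff (ha : AddableCB tw k n Λ i) (hji : j ≠ i) :
    BadCB tw k n (addOne Λ i) j ↔ BadCB tw k n Λ j :=
  or_congr (ha.addableCB_addOne_iff hji) (ha.removableCB_addOne_iff hji)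

theorem IsTruncated.le_maxBad (h : IsTruncated k n Λ) (hb : BadCB tw k n Λ i) :
    i ≤ maxBad tw k n Λ :=
  Nat.le_findGreatest (h.lt_of_badCB hb).le hb

theorem IsTruncated.badCB_maxBad (h : IsTruncated k n Λ) (hb : BadCB tw k n Λ i) :
    BadCB tw k n Λ (maxBad tw k n Λ) :=
  Nat.findGreatest_spec (h.lt_of_badCB hb).le hb

theorem IsTruncated.maxBad_addOne (h : IsTruncated k n Λ) (ha : AddableCB tw k n Λ i) :
    maxBad tw k n (addOne Λ i) = maxBad tw k n Λ := by
  have h' := ha.isTruncated_addOne h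
  have hbad : BadCB tw k n (addOne Λ i) (maxBad tw k n Λ) := by
    rcases eq_or_ne (maxBad tw k n Λ) i with hi | hi
    · rw [hi]; exact Or.inr (h.removableCB_addOne_self ha)
    · exact (ha.badCB_addOne_iff hi).mpr (h.badCB_maxBad (Or.inl ha))
  refine le_antisymm ?_ (h'.le_maxBad hbad)
  have hi := h.le_maxBad (Or.inl ha)
  by_contra! hlt
  have hne : maxBad tw k n (addOne Λ i) ≠ i := by omega
  have := h.le_maxBad ((ha.badCB_addOne_iff hne).mp (h'.badCB_maxBad hbad))
  omega

end Combinatorics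

section Cochain

variable {tw : Bool} {k n : ℕ} {V : Type*} [AddCommGroup V] [Module (ZMod 2) V]
  {B : Module.Basis {Λ : ℕ → ℕ // IsTruncated k n Λ} (ZMod 2) V} {Sq : V →ₗ[ZMod 2] V}
  {f : ℕ → ℕ}

def IsSqTwo (tw : Bool) (k n : ℕ)
    (B : Module.Basis {Λ : ℕ → ℕ // IsTruncated k n Λ} (ZMod 2) V) (Sq : V →ₗ[ZMod 2] V) : Prop :=
  ∀ Λ : {Λ : ℕ → ℕ // IsTruncated k n Λ},
    Sq (B Λ) = ∑ i ∈ Finset.range k,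
      if AddableCB tw k n Λ.1 i then extB k n B (addOne Λ.1 i) else 0

def irredundantFullSpan (tw : Bool) (k n : ℕ)
    (B : Module.Basis {Λ : ℕ → ℕ // IsTruncated k n Λ} (ZMod 2) V) : Submodule (ZMod 2) V :=
  Submodule.span (ZMod 2) (⇑B '' {Λ | IrredundantCB tw Λ.1 ∧ FullCB tw k n Λ.1})

noncomputable def contractingHomotopy (tw : Bool) (k n : ℕ)
    (B : Module.Basis {Λ : ℕ → ℕ // IsTruncated k n Λ} (ZMod 2) V) : V →ₗ[ZMod 2] V :=
  B.constr (ZMod 2) fun Λ =>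
    if RemovableCB tw Λ.1 (maxBad tw k n Λ.1) then
      extB k n B (removeOne Λ.1 (maxBad tw k n Λ.1)) else 0

noncomputable def irredundantFullProjection (tw : Bool) (k n : ℕ)
    (B : Module.Basis {Λ : ℕ → ℕ // IsTruncated k n Λ} (ZMod 2) V) : V →ₗ[ZMod 2] V :=
  B.constr (ZMod 2) fun Λ => if IrredundantCB tw Λ.1 ∧ FullCB tw k n Λ.1 then B Λ else 0

theorem extB_of_isTruncated (h : IsTruncated k n f) : extB k n B f = B ⟨f, h⟩ := dif_pos h

theorem contractingHomotopy_basis (hf : IsTruncated k n f) :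
    contractingHomotopy tw k n B (B ⟨f, hf⟩) =
      if RemovableCB tw f (maxBad tw k n f) then
        extB k n B (removeOne f (maxBad tw k n f)) else 0 :=
  B.constr_basis _ _ _

theorem irredundantFullProjection_basis (hf : IsTruncated k n f) :
    irredundantFullProjection tw k n B (B ⟨f, hf⟩) =
      if IrredundantCB tw f ∧ FullCB tw k n f then B ⟨f, hf⟩ else 0 :=
  B.constr_basis _ _ _

theorem range_irredundantFullProjection_le :
    LinearMap.range (irredundantFullProjection tw k n B) ≤ irredundantFullSpan tw k n B := by
  rw [irredundantFullProjection, B.constr_range, Submodule.span_le]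
  rintro _ ⟨Λ, rfl⟩
  dsimp only
  split_ifs with hΛ
  · exact Submodule.subset_span ⟨Λ, hΛ, rfl⟩
  · exact Submodule.zero_mem _

theorem irredundantFullProjection_of_mem {v : V} (hv : v ∈ irredundantFullSpan tw k n B) :
    irredundantFullProjection tw k n B v = v := by
  refine LinearMap.eqOn_span (g := LinearMap.id) ?_ hv
  rintro _ ⟨⟨f, hf⟩, hΛ, rfl⟩
  exact (irredundantFullProjection_basis hf).trans (if_pos hΛ)

theorem contractingHomotopy_basis_addOne (hf : IsTruncated k n f) {j : ℕ}
    (ha : AddableCB tw k n f j) :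
    contractingHomotopy tw k n B (B ⟨addOne f j, ha.isTruncated_addOne hf⟩) =
      if j = maxBad tw k n f then B ⟨f, hf⟩
      else if RemovableCB tw f (maxBad tw k n f) then
        extB k n B (addOne (removeOne f (maxBad tw k n f)) j) else 0 := by
  rw [contractingHomotopy_basis, hf.maxBad_addOne ha]
  rcases eq_or_ne j (maxBad tw k n f) with hj | hj
  · rw [if_pos hj, ← hj, if_pos (hf.removableCB_addOne_self ha), removeOne_addOne,
      extB_of_isTruncated hf]
  · rw [if_neg hj, removeOne_addOne_comm hj, if_congr (ha.removableCB_addOne_iff hj.symm) rfl rfl]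

namespace IsSqTwo

variable (hSq : IsSqTwo tw k n B Sq)
include hSq

theorem sq_basis (hf : IsTruncated k n f) :
    Sq (B ⟨f, hf⟩) = ∑ i ∈ Finset.range k,
      if AddableCB tw k n f i then extB k n B (addOne f i) else 0 :=
  hSq ⟨f, hf⟩

theorem sq_comp_sq : Sq ∘ₗ Sq = 0 := by
  refine B.ext fun ⟨f, hf⟩ => ?_
  let g i j := if AddableCB tw k n f i ∧ AddableCB tw k n (addOne f i) j then
    extB k n B (addOne (addOne f i) j) else 0
  have hrow : ∀ i, Sq (if AddableCB tw k n f i then extB k n B (addOne f i) else 0) =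
      ∑ j ∈ Finset.range k, g i j := fun i => by
    by_cases hi : AddableCB tw k n f i
    · simp only [g, hi, if_true, true_and, extB_of_isTruncated (hi.isTruncated_addOne hf),
        hSq.sq_basis]
    · simp only [g, hi, if_false, false_and, map_zero, Finset.sum_const_zero]
  have hsymm : ∀ i j, g i j = g j i := fun i j => by
    rcases eq_or_ne i j with rfl | hij
    · rfl
    · simp only [g]
      split_ifs with h h' h'
      · rw [addOne_comm hij]
      · exact absurd (h.1.addableCB_addOne_comm h.2) h'
      · exact absurd (h'.1.addableCB_addOne_comm h'.2) h
      · rfl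
  have hdiag : ∀ i, g i i = 0 := fun i => if_neg fun h => h.1.not_addableCB_addOne h.2
  simp only [LinearMap.comp_apply, LinearMap.zero_apply, hSq.sq_basis, map_sum, hrow]
  exact Finset.sum_sum_eq_zero_of_symm _ g hsymm hdiag

theorem irredundantFullSpan_le_ker : irredundantFullSpan tw k n B ≤ LinearMap.ker Sq := by
  refine Submodule.span_le.mpr ?_
  rintro _ ⟨⟨f, hf⟩, ⟨-, hfull⟩, rfl⟩
  simp only [SetLike.mem_coe, LinearMap.mem_ker, hSq.sq_basis, if_neg (hfull _),
    Finset.sum_const_zero]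

theorem irredundantFullProjection_comp_sq : irredundantFullProjection tw k n B ∘ₗ Sq = 0 := by
  refine B.ext fun ⟨f, hf⟩ => ?_
  rw [LinearMap.comp_apply, LinearMap.zero_apply, hSq.sq_basis, map_sum]
  refine Finset.sum_eq_zero fun i _ => ?_
  split_ifs with ha
  · rw [extB_of_isTruncated (ha.isTruncated_addOne hf), irredundantFullProjection_basis,
      if_neg fun h => h.1 i (hf.removableCB_addOne_self ha)]
  · exact map_zero _

theorem contractingHomotopy_sq_basis (hf : IsTruncated k n f) :
    contractingHomotopy tw k n B (Sq (B ⟨f, hf⟩)) = ∑ j ∈ Finset.range k,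
      if AddableCB tw k n f j then
        (if j = maxBad tw k n f then B ⟨f, hf⟩
        else if RemovableCB tw f (maxBad tw k n f) then
          extB k n B (addOne (removeOne f (maxBad tw k n f)) j) else 0)
      else 0 := by
  rw [hSq.sq_basis, map_sum]
  refine Finset.sum_congr rfl fun j _ => ?_
  by_cases ha : AddableCB tw k n f j
  · rw [if_pos ha, if_pos ha, extB_of_isTruncated (ha.isTruncated_addOne hf),
      contractingHomotopy_basis_addOne hf ha]
  · rw [if_neg ha, if_neg ha, map_zero]

theorem sq_contractingHomotopy_add_of_removableCB (hf : IsTruncated k n f)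
    (hr : RemovableCB tw f (maxBad tw k n f)) :
    Sq (contractingHomotopy tw k n B (B ⟨f, hf⟩)) +
      contractingHomotopy tw k n B (Sq (B ⟨f, hf⟩)) = B ⟨f, hf⟩ := by
  set i₀ := maxBad tw k n f
  have hg := hr.isTruncated_removeOne hf
  have hag := hr.addableCB_removeOne hf
  have hgf : addOne (removeOne f i₀) i₀ = f := addOne_removeOne (by have := hr.1; omega)
  rw [contractingHomotopy_basis, if_pos hr, extB_of_isTruncated hg, hSq.sq_basis,
    hSq.contractingHomotopy_sq_basis, ← Finset.sum_add_distrib]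
  -- the white boxes `j ≠ i₀` addable to `f` and to `f` minus its box in row `i₀` are the
  -- same, and their two contributions cancel
  rw [Finset.sum_eq_single_of_mem i₀ (Finset.mem_range.mpr (hf.lt_of_badCB (Or.inr hr)))]
  · rw [if_pos hag, if_neg hr.not_addableCB, add_zero, hgf, extB_of_isTruncated hf]
  · intro j _ hj
    have hiff : AddableCB tw k n (removeOne f i₀) j ↔ AddableCB tw k n f j := by
      conv_rhs => rw [← hgf]
      exact (hag.addableCB_addOne_iff hj).symm
    rw [if_congr hiff rfl rfl, if_neg hj, if_pos hr]
    exact ZModModule.add_self _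

theorem sq_contractingHomotopy_add_of_addableCB (hf : IsTruncated k n f)
    (ha : AddableCB tw k n f (maxBad tw k n f)) :
    Sq (contractingHomotopy tw k n B (B ⟨f, hf⟩)) +
      contractingHomotopy tw k n B (Sq (B ⟨f, hf⟩)) = B ⟨f, hf⟩ := by
  have hr : ¬ RemovableCB tw f (maxBad tw k n f) := fun hr => hr.not_addableCB ha
  rw [contractingHomotopy_basis, if_neg hr, map_zero, zero_add, hSq.contractingHomotopy_sq_basis]
  rw [Finset.sum_eq_single_of_mem _ (Finset.mem_range.mpr (hf.lt_of_badCB (Or.inl ha)))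
    fun j _ hj => by simp only [if_neg hj, if_neg hr, ite_self], if_pos ha, if_pos rfl]

theorem homotopy_formula :
    Sq ∘ₗ contractingHomotopy tw k n B + contractingHomotopy tw k n B ∘ₗ Sq +
      irredundantFullProjection tw k n B = LinearMap.id := by
  refine B.ext fun ⟨f, hf⟩ => ?_
  simp only [LinearMap.add_apply, LinearMap.comp_apply, LinearMap.id_apply]
  by_cases hbad : ∃ i, BadCB tw k n f i
  · obtain ⟨i, hi⟩ := hbad
    have htop := hf.badCB_maxBad hi
    rw [irredundantFullProjection_basis, if_neg fun h => htop.elim (h.2 _) (h.1 _), add_zero]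
    rcases htop with ha | hr
    · exact hSq.sq_contractingHomotopy_add_of_addableCB hf ha
    · exact hSq.sq_contractingHomotopy_add_of_removableCB hf hr
  · have hΛ : IrredundantCB tw f ∧ FullCB tw k n f :=
      ⟨fun i h => hbad ⟨i, Or.inr h⟩, fun i h => hbad ⟨i, Or.inl h⟩⟩
    have hsq : Sq (B ⟨f, hf⟩) = 0 :=
      hSq.irredundantFullSpan_le_ker (Submodule.subset_span ⟨⟨f, hf⟩, hΛ, rfl⟩)
    rw [contractingHomotopy_basis, if_neg (hΛ.1 _), hsq, map_zero, map_zero, zero_add, zero_add,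
      irredundantFullProjection_basis, if_pos hΛ]

end IsSqTwo

end Cochain

theorem stmt11_general (tw : Bool) (k n : ℕ)
    (V : Type*) [AddCommGroup V] [Module (ZMod 2) V]
    (B : Module.Basis {Λ : ℕ → ℕ // IsTruncated k n Λ} (ZMod 2) V)
    (Sq : V →ₗ[ZMod 2] V)
    (hSq : ∀ Λ : {Λ : ℕ → ℕ // IsTruncated k n Λ},
      Sq (B Λ) = ∑ i ∈ Finset.range k,
        if AddableCB tw k n Λ.1 i then extB k n B (addOne Λ.1 i) else 0) :
    Sq ∘ₗ Sq = 0 ∧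
    LinearMap.ker Sq = LinearMap.range Sq ⊔
      Submodule.span (ZMod 2)
        (⇑B '' {Λ | IrredundantCB tw Λ.1 ∧ FullCB tw k n Λ.1}) ∧
    LinearMap.range Sq ⊓
      Submodule.span (ZMod 2)
        (⇑B '' {Λ | IrredundantCB tw Λ.1 ∧ FullCB tw k n Λ.1}) = ⊥ := by
  have hSq : IsSqTwo tw k n B Sq := hSq
  exact ⟨hSq.sq_comp_sq,
    LinearMap.ker_eq_range_sup_of_homotopy hSq.sq_comp_sq hSq.homotopy_formula
      range_irredundantFullProjection_le hSq.irredundantFullSpan_le_ker,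
    disjoint_iff.mp <| LinearMap.disjoint_range_of_comp_eq_zero
      hSq.irredundantFullProjection_comp_sq fun _ => irredundantFullProjection_of_mem⟩

/-- on the `ℤ/2`-vector space with basis the `(k,n)`-truncated
checkerboard Young diagrams, with `Sq²(Λ) = Σ_{Λ' = Λ + a white box} Λ'`, one has
`Sq² ∘ Sq² = 0` and `Ker Sq² = Im Sq² ⊕ N`, where `N` is spanned by the diagrams that
are both irredundant and full. -/
theorem stmt11 (tw : Bool) (k n : ℕ) (hkn : k ≤ n)
    (V : Type*) [AddCommGroup V] [Module (ZMod 2) V]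
    (B : Module.Basis {Λ : ℕ → ℕ // IsTruncated k n Λ} (ZMod 2) V)
    (Sq : V →ₗ[ZMod 2] V)
    (hSq : ∀ Λ : {Λ : ℕ → ℕ // IsTruncated k n Λ},
      Sq (B Λ) = ∑ i ∈ Finset.range k,
        if AddableCB tw k n Λ.1 i then extB k n B (addOne Λ.1 i) else 0) :
    Sq ∘ₗ Sq = 0 ∧
    LinearMap.ker Sq = LinearMap.range Sq ⊔
      Submodule.span (ZMod 2)
        (⇑B '' {Λ | IrredundantCB tw Λ.1 ∧ FullCB tw k n Λ.1}) ∧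
    LinearMap.range Sq ⊓
      Submodule.span (ZMod 2)
        (⇑B '' {Λ | IrredundantCB tw Λ.1 ∧ FullCB tw k n Λ.1}) = ⊥ :=
  stmt11_general tw k n V B Sq hSq
end

section
/- Let Λ be an irredundant (k,n)-truncated checkerboard Young diagram that is not full, and let m = |A(Λ)| ≥ 1 be the number of positions where a white box may be added. Identify span_{Z/2Z} Ā(Λ) with the exterior-algebra-like space (Z/2Z)^{2^m} with basis Λ_S for S ⊆ {1,…,m} (Λ_S = Λ with white boxes added at positions in S). Then within this component Ker(Sq²) = Im(Sq²), and the set {Sq²(Λ_S) : S ⊆ {2,…,m}} is a Z/2Z-basis of Ker(Sq²) ∩ span Ā(Λ). -/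
/-!
Let `d` add one new element to a subset (a sum over all choices) and let `h` remove a fixed
element `i` (and vanish on subsets not containing `i`). In characteristic two `d ∘ d = 0`,
since adding `j` then `k` gives the same subset as adding `k` then `j`, and
`d ∘ h + h ∘ d = id`, so `h` is a contracting homotopy. Hence every cycle `x` is the boundary
`d (h x)`, where `h x` lies in the span of the basis vectors indexed by subsets avoiding `i`,
and on that span `h` is a left inverse of `d`.
-/

open Finset

section CharTwoModule

variable {V : Type*} [AddCommGroup V]

theorem add_self_eq_zero_of_charTwo (R : Type*) [Ring R] [CharP R 2] [Module R V] (v : V) :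
    v + v = 0 := by
  rw [← two_smul R v, CharTwo.two_eq_zero, zero_smul]

theorem Finset.sum_sum_erase_eq_zero_of_symm (R : Type*) [Ring R] [CharP R 2] [Module R V]
    {α : Type*} [DecidableEq α] (s : Finset α) (f : α → α → V)
    (hf : ∀ j k, f j k = f k j) :
    ∑ j ∈ s, ∑ k ∈ s.erase j, f j k = 0 := by
  rw [sum_sigma']
  refine sum_involution (fun x _ => ⟨x.2, x.1⟩) (fun x _ => ?_) (fun x hx _ => ?_)
    (fun x hx => ?_) (fun _ _ => rfl)
  · rw [hf]
    exact add_self_eq_zero_of_charTwo R _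
  · have hne := (mem_erase.mp (mem_sigma.mp hx).2).1
    exact fun h => hne (congrArg Sigma.fst h)
  · obtain ⟨hj, hk⟩ := mem_sigma.mp hx
    obtain ⟨hne, hk⟩ := mem_erase.mp hk
    exact mem_sigma.mpr ⟨hk, mem_erase.mpr ⟨hne.symm, hj⟩⟩

end CharTwoModule

namespace LinearMap

variable {R M : Type*} [Ring R] [AddCommGroup M] [Module R M] {d h : M →ₗ[R] M}

theorem apply_apply_eq_self_of_homotopy (hdh : d ∘ₗ h + h ∘ₗ d = id) {x : M}
    (hx : x ∈ ker d) : d (h x) = x := by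
  simpa [mem_ker.mp hx] using congr($hdh x)

theorem ker_eq_range_of_homotopy (hdd : d ∘ₗ d = 0) (hdh : d ∘ₗ h + h ∘ₗ d = id) :
    ker d = range d := by
  refine le_antisymm (fun x hx => ⟨h x, apply_apply_eq_self_of_homotopy hdh hx⟩) ?_
  rintro _ ⟨y, rfl⟩
  exact congr($hdd y)

end LinearMap

section Koszul

variable {R ι V : Type*} [CommRing R] [AddCommGroup V] [Module R V] [DecidableEq ι]
  (b : Module.Basis (Finset ι) R V)

noncomputable def koszulContraction (i : ι) : V →ₗ[R] V :=
  b.constr R fun S => if i ∈ S then b (S.erase i) else 0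

theorem koszulContraction_basis (i : ι) (S : Finset ι) :
    koszulContraction b i (b S) = if i ∈ S then b (S.erase i) else 0 :=
  b.constr_basis R _ S

theorem range_koszulContraction_le (i : ι) :
    LinearMap.range (koszulContraction b i) ≤
      Submodule.span R (Set.range fun S : {S : Finset ι // i ∉ S} => b S.1) := by
  rw [LinearMap.range_eq_map, ← b.span_eq, Submodule.map_span, Submodule.span_le]
  rintro _ ⟨_, ⟨S, rfl⟩, rfl⟩
  rw [koszulContraction_basis]
  split_ifs
  · exact Submodule.subset_span ⟨⟨S.erase i, notMem_erase i S⟩, rfl⟩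
  · exact Submodule.zero_mem _

variable [Fintype ι]

noncomputable def koszulDiff : V →ₗ[R] V :=
  b.constr R fun S => ∑ j ∈ Sᶜ, b (insert j S)

theorem koszulDiff_basis (S : Finset ι) : koszulDiff b (b S) = ∑ j ∈ Sᶜ, b (insert j S) :=
  b.constr_basis R _ S

theorem koszulContraction_koszulDiff_basis {i : ι} {S : Finset ι} (hi : i ∉ S) :
    koszulContraction b i (koszulDiff b (b S)) = b S := by
  rw [koszulDiff_basis, map_sum, sum_eq_single_of_mem i (mem_compl.mpr hi)]
  · rw [koszulContraction_basis, if_pos (mem_insert_self i S), erase_insert hi]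
  · intro j _ hji
    rw [koszulContraction_basis, if_neg (by simp [Ne.symm hji, hi])]

theorem linearIndependent_koszulDiff_basis (i : ι) :
    LinearIndependent R fun S : {S : Finset ι // i ∉ S} => koszulDiff b (b S.1) := by
  refine LinearIndependent.of_comp (koszulContraction b i) ?_
  have hcomp :
      (koszulContraction b i ∘ fun S : {S : Finset ι // i ∉ S} => koszulDiff b (b S.1)) =
        fun S => b S.1 := funext fun S => koszulContraction_koszulDiff_basis b S.2
  rw [hcomp]
  exact b.linearIndependent.comp Subtype.val Subtype.val_injective

variable [CharP R 2]

theorem koszulDiff_comp_self : koszulDiff b ∘ₗ koszulDiff b = 0 := by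
  refine b.ext fun S => ?_
  simp only [LinearMap.comp_apply, LinearMap.zero_apply, koszulDiff_basis, map_sum, compl_insert]
  exact sum_sum_erase_eq_zero_of_symm R _ (fun j k => b (insert k (insert j S)))
    fun j k => by rw [insert_comm]

theorem koszulDiff_comp_koszulContraction_add (i : ι) :
    koszulDiff b ∘ₗ koszulContraction b i + koszulContraction b i ∘ₗ koszulDiff b =
      LinearMap.id := by
  refine b.ext fun S => ?_
  simp only [LinearMap.add_apply, LinearMap.comp_apply, LinearMap.id_apply]
  by_cases hi : i ∈ S
  · have hic : i ∉ Sᶜ := notMem_compl.mpr hi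
    have hcontract : ∀ j ∈ Sᶜ,
        koszulContraction b i (b (insert j S)) = b (insert j (S.erase i)) := fun j hj => by
      rw [koszulContraction_basis, if_pos (mem_insert_of_mem hi),
        erase_insert_of_ne (ne_of_mem_of_not_mem hj hic)]
    rw [koszulContraction_basis, if_pos hi, koszulDiff_basis, koszulDiff_basis, compl_erase,
      sum_insert hic, insert_erase hi, map_sum, sum_congr rfl hcontract, add_assoc,
      add_self_eq_zero_of_charTwo R, add_zero]
  · rw [koszulContraction_koszulDiff_basis b hi, koszulContraction_basis, if_neg hi, map_zero,
      zero_add]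

theorem ker_koszulDiff_eq_range [Nonempty ι] :
    LinearMap.ker (koszulDiff b) = LinearMap.range (koszulDiff b) :=
  LinearMap.ker_eq_range_of_homotopy (koszulDiff_comp_self b)
    (koszulDiff_comp_koszulContraction_add b (Classical.arbitrary ι))

theorem span_koszulDiff_basis_eq_ker (i : ι) :
    Submodule.span R (Set.range fun S : {S : Finset ι // i ∉ S} => koszulDiff b (b S.1)) =
      LinearMap.ker (koszulDiff b) := by
  refine le_antisymm (Submodule.span_le.mpr ?_) fun x hx => ?_
  · rintro _ ⟨S, rfl⟩
    exact congr($(koszulDiff_comp_self b) (b S.1))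
  · rw [← LinearMap.apply_apply_eq_self_of_homotopy
        (koszulDiff_comp_koszulContraction_add b i) hx,
      Set.range_comp' (koszulDiff b) fun S : {S : Finset ι // i ∉ S} => b S.1,
      Submodule.span_image]
    exact Submodule.mem_map_of_mem (range_koszulContraction_le b i ⟨x, rfl⟩)

end Koszul

-- Addable positions `1, …, m + 1` are indexed by `Fin (m + 1)`, so position `1` is `0`.
/-- Koszul-type model of the component `span Ā(Λ)` of an irredundant,
not full, diagram with `m+1 ≥ 1` addable positions: basis `Λ_S` indexed by subsets
`S ⊆ {1,…,m+1}` (here `S : Finset (Fin (m+1))`), with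
`Sq²(Λ_S) = Σ_{j ∉ S} Λ_{S ∪ {j}}`.  Then `Ker Sq² = Im Sq²`, and the family
`{Sq²(Λ_S) : 1 ∉ S}` (`1` being the first addable position, here `0 : Fin (m+1)`)
is a `ℤ/2`-basis of `Ker Sq²`. -/
theorem stmt13 (m : ℕ) (V : Type*) [AddCommGroup V] [Module (ZMod 2) V]
    (B : Module.Basis (Finset (Fin (m + 1))) (ZMod 2) V)
    (Sq : V →ₗ[ZMod 2] V)
    (hSq : ∀ S : Finset (Fin (m + 1)), Sq (B S) = ∑ j ∈ Sᶜ, B (insert j S)) :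
    LinearMap.ker Sq = LinearMap.range Sq ∧
    LinearIndependent (ZMod 2)
      (fun S : {S : Finset (Fin (m + 1)) // 0 ∉ S} => Sq (B S.1)) ∧
    Submodule.span (ZMod 2)
      (Set.range fun S : {S : Finset (Fin (m + 1)) // 0 ∉ S} => Sq (B S.1)) =
      LinearMap.ker Sq := by
  obtain rfl : Sq = koszulDiff B := B.ext fun S => (hSq S).trans (koszulDiff_basis B S).symm
  exact ⟨ker_koszulDiff_eq_range B, linearIndependent_koszulDiff_basis B 0,
    span_koszulDiff_basis_eq_ker B 0⟩
end

section
/- Let Λ be an irredundant, not full, (k,n)-truncated checkerboard diagram with m = |A(Λ)| addable positions, and work over Z. Lift Sq² to the Z-linear map on Z{Λ_S : S ⊆ {1,…,m}} by Sq²(Λ_S) = Σ_{j∉S} Λ_{S∪{j}}, and let π be reduction mod 2. Then the set S_Λ = {Sq²(Λ_{i₁,…,i_l}) : i₁ > 1} ∪ {2Λ_{i₁,…,i_l} : i₁ > 1} (that is, Sq²(Λ_S) and 2Λ_S for S ⊆ {2,…,m}) is a Z-basis of Ker(π ∘ Sq²_{mod 2} ∘ π) ∩ Z{Λ_S}, i.e.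 of the group of integer combinations whose mod-2 reduction lies in Ker(Sq²). -/
lemma key_repr {m : ℕ} {R M : Type*} [Semiring R] [AddCommMonoid M] [Module R M]
    (b : Module.Basis (Finset (Fin (m+1))) R M) (S T : Finset (Fin (m+1)))
    (hS : (0 : Fin (m+1)) ∉ S) (hT : (0 : Fin (m+1)) ∈ T) :
    b.repr (∑ j ∈ Sᶜ, b (insert j S)) T = if T = insert 0 S then 1 else 0 := by
  rw [map_sum]
  simp only [Module.Basis.repr_self, Finsupp.coe_finset_sum, Finset.sum_apply, Finsupp.single_apply]
  by_cases h : T = insert 0 S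
  · subst h
    rw [if_pos rfl, Finset.sum_eq_single (0 : Fin (m+1))]
    · rw [if_pos rfl]
    · intro j hj hj0
      rw [if_neg]
      intro he
      have h0 : (0 : Fin (m+1)) ∈ insert j S := he ▸ Finset.mem_insert_self 0 S
      rcases Finset.mem_insert.1 h0 with h' | h'
      · exact hj0 h'.symm
      · exact hS h'
    · intro h0; exact absurd (Finset.mem_compl.2 hS) h0
  · rw [if_neg h, Finset.sum_eq_zero]
    intro j hj
    rw [if_neg]
    intro he
    have h0 : (0:Fin (m+1)) ∈ insert j S := he ▸ hT
    rcases Finset.mem_insert.1 h0 with h' | h'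
    · exact h (by rw [← he, ← h'])
    · exact absurd h' hS

/-- integral Koszul-type model of the component of an irredundant,
not full, diagram `Λ` with `m+1 ≥ 1` addable positions.  `V` is the free abelian
group on the `Λ_S` (`S : Finset (Fin (m+1))`), `SqZ` the integral lift of `Sq²`
(`SqZ(Λ_S) = Σ_{j∉S} Λ_{S∪{j}}`), `π` the reduction modulo 2 onto the `ℤ/2`-space `W`
with basis `Λ_S`, and `Sq₂` the mod-2 Steenrod map.  Then the family
`{SqZ(Λ_S) : 1 ∉ S} ∪ {2·Λ_S : 1 ∉ S}` (the first addable position being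
`0 : Fin (m+1)`) is a `ℤ`-basis of the subgroup
`Ker(Sq₂ ∘ π) = {v : π v ∈ Ker Sq₂}`. -/
theorem stmt14 (m : ℕ)
    (V : Type*) [AddCommGroup V] [Module ℤ V]
    (W : Type*) [AddCommGroup W] [Module (ZMod 2) W]
    (B : Module.Basis (Finset (Fin (m + 1))) ℤ V)
    (B₂ : Module.Basis (Finset (Fin (m + 1))) (ZMod 2) W)
    (SqZ : V →ₗ[ℤ] V)
    (hSqZ : ∀ S : Finset (Fin (m + 1)), SqZ (B S) = ∑ j ∈ Sᶜ, B (insert j S))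
    (Sq₂ : W →ₗ[ZMod 2] W)
    (hSq₂ : ∀ S : Finset (Fin (m + 1)), Sq₂ (B₂ S) = ∑ j ∈ Sᶜ, B₂ (insert j S))
    (π : V →+ W) (hπ : ∀ S : Finset (Fin (m + 1)), π (B S) = B₂ S) :
    LinearIndependent ℤ
      (Sum.elim (fun S : {S : Finset (Fin (m + 1)) // 0 ∉ S} => SqZ (B S.1))
        (fun S : {S : Finset (Fin (m + 1)) // 0 ∉ S} => (2 : ℤ) • B S.1)) ∧
    ∀ v : V,
      v ∈ Submodule.span ℤ (Set.range
          (Sum.elim (fun S : {S : Finset (Fin (m + 1)) // 0 ∉ S} => SqZ (B S.1))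
            (fun S : {S : Finset (Fin (m + 1)) // 0 ∉ S} => (2 : ℤ) • B S.1))) ↔
        Sq₂ (π v) = 0 := by
  classical
  letI : Unique (Module ℤ V) := AddCommGroup.uniqueIntModule
  have hMod : ‹Module ℤ V› = AddCommGroup.toIntModule V := Subsingleton.elim _ _
  subst hMod
  have h2W : ∀ w : W, w + w = 0 := by
    intro w
    have := two_smul (ZMod 2) w
    rw [show (2 : ZMod 2) = 0 by decide, zero_smul] at this
    exact this.symm
  -- Sq₂ ∘ Sq₂ = 0 on basis elements
  have hSqSq : ∀ S, Sq₂ (Sq₂ (B₂ S)) = 0 := by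
    intro S
    rw [hSq₂, map_sum]
    simp only [hSq₂]
    rw [Finset.sum_sigma']
    refine Finset.sum_involution (fun p _ => ⟨p.2, p.1⟩) ?_ ?_ ?_ ?_
    · intro a ha
      have hc : insert a.1 (insert a.2 S) = insert a.2 (insert a.1 S) :=
        Finset.insert_comm _ _ _
      rw [hc]
      exact h2W _
    · intro a ha _ he
      have h1 := congrArg Sigma.fst he
      simp only [Finset.mem_sigma] at ha
      have hne : a.2 ≠ a.1 := by
        intro h
        exact (Finset.mem_compl.1 ha.2) (h ▸ Finset.mem_insert_self a.1 S)
      exact hne (by simpa using h1)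
    · intro a ha
      simp only [Finset.mem_sigma, Finset.mem_compl] at ha ⊢
      obtain ⟨h1, h2'⟩ := ha
      refine ⟨fun h => h2' (Finset.mem_insert_of_mem h), fun h => ?_⟩
      rcases Finset.mem_insert.1 h with h' | h'
      · exact h2' (h' ▸ Finset.mem_insert_self _ _)
      · exact h1 h'
    · intro a ha
      rfl
  set φ : V →ₗ[ℤ] W := (Sq₂.toAddMonoidHom.comp π).toIntLinearMap with hφdef
  have hφ : ∀ v, φ v = Sq₂ (π v) := fun v => rfl
  have hφB : ∀ S, φ (B S) = Sq₂ (B₂ S) := fun S => by rw [hφ, hπ]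
  have hφSqZ : ∀ S, φ (SqZ (B S)) = 0 := by
    intro S
    rw [hφ, hSqZ, map_sum]
    simp only [hπ]
    rw [← hSq₂, hSqSq]
  have hφ2B : ∀ S, φ ((2 : ℤ) • B S) = 0 := by
    intro S
    rw [φ.map_smul, hφB, two_smul ℤ (Sq₂ (B₂ S))]
    exact h2W _
  have hreprSqZ : ∀ (S T : Finset (Fin (m+1))), 0 ∉ S → 0 ∈ T →
      B.repr (SqZ (B S)) T = if T = insert 0 S then 1 else 0 := by
    intro S T hS hT
    rw [hSqZ]
    exact key_repr B S T hS hT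
  constructor
  · -- linear independence
    rw [Fintype.linearIndependent_iff]
    intro g hg
    rw [Fintype.sum_sum_type] at hg
    simp only [Sum.elim_inl, Sum.elim_inr] at hg
    have h1 : ∀ S₀ : {S : Finset (Fin (m + 1)) // 0 ∉ S}, g (Sum.inl S₀) = 0 := by
      intro S₀
      have hc := congrArg (B.coord (insert 0 S₀.1)) hg
      rw [map_add, map_sum, map_sum, map_zero] at hc
      simp only [map_smul] at hc
      have e1 : ∑ S : {S : Finset (Fin (m + 1)) // 0 ∉ S},
          g (Sum.inl S) • (B.coord (insert 0 S₀.1)) (SqZ (B S.1)) = g (Sum.inl S₀) := by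
        rw [Finset.sum_eq_single S₀]
        · rw [Module.Basis.coord_apply, hreprSqZ _ _ S₀.2 (Finset.mem_insert_self _ _), if_pos rfl,
            smul_eq_mul, mul_one]
        · intro S _ hne
          rw [Module.Basis.coord_apply, hreprSqZ _ _ S.2 (Finset.mem_insert_self _ _), if_neg, smul_zero]
          intro he
          apply hne
          apply Subtype.ext
          have := congrArg (fun t => Finset.erase t 0) he
          simpa [Finset.erase_insert S.2, Finset.erase_insert S₀.2] using this.symm
        · intro h; exact absurd (Finset.mem_univ S₀) h
      have e2 : ∑ S : {S : Finset (Fin (m + 1)) // 0 ∉ S},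
          g (Sum.inr S) • (2 : ℤ) • (B.coord (insert 0 S₀.1)) (B S.1) = 0 := by
        apply Finset.sum_eq_zero
        intro S _
        rw [Module.Basis.coord_apply, Module.Basis.repr_self, Finsupp.single_apply, if_neg, smul_zero,
          smul_zero]
        intro he
        exact S.2 (he ▸ Finset.mem_insert_self 0 S₀.1)
      rw [e1, e2, add_zero] at hc
      exact hc
    have h2' : ∀ S₀ : {S : Finset (Fin (m + 1)) // 0 ∉ S}, g (Sum.inr S₀) = 0 := by
      intro S₀
      have hz : ∑ S : {S : Finset (Fin (m + 1)) // 0 ∉ S},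
          g (Sum.inl S) • SqZ (B S.1) = 0 := by
        apply Finset.sum_eq_zero
        intro S _
        rw [h1 S, zero_smul]
      rw [hz, zero_add] at hg
      have hc := congrArg (B.coord S₀.1) hg
      rw [map_sum, map_zero] at hc
      have e2 : ∑ S : {S : Finset (Fin (m + 1)) // 0 ∉ S},
          (B.coord S₀.1) (g (Sum.inr S) • (2 : ℤ) • B S.1) = 2 * g (Sum.inr S₀) := by
        rw [Finset.sum_eq_single S₀]
        · rw [map_smul, map_smul, Module.Basis.coord_apply, Module.Basis.repr_self, Finsupp.single_apply,
            if_pos rfl]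
          simp [mul_comm]
        · intro S _ hne
          rw [map_smul, map_smul, Module.Basis.coord_apply, Module.Basis.repr_self, Finsupp.single_apply,
            if_neg, smul_zero, smul_zero]
          intro he
          exact hne (Subtype.ext he)
        · intro h; exact absurd (Finset.mem_univ S₀) h
      rw [e2] at hc
      omega
    intro i
    cases i with
    | inl S => exact h1 S
    | inr S => exact h2' S
  · -- span characterization
    intro v
    constructor
    · -- span ⊆ kernel
      intro hv
      have hle : Submodule.span ℤ (Set.range
          (Sum.elim (fun S : {S : Finset (Fin (m + 1)) // 0 ∉ S} => SqZ (B S.1))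
            (fun S : {S : Finset (Fin (m + 1)) // 0 ∉ S} => (2 : ℤ) • B S.1))) ≤
          LinearMap.ker φ := by
        rw [Submodule.span_le]
        rintro x ⟨i, rfl⟩
        cases i with
        | inl S => exact LinearMap.mem_ker.2 (hφSqZ S.1)
        | inr S => exact LinearMap.mem_ker.2 (hφ2B S.1)
      have := hle hv
      rw [LinearMap.mem_ker] at this
      rw [← hφ v]
      exact this
    · -- kernel ⊆ span
      intro hv
      have hφv : φ v = 0 := by rw [hφ]; exact hv
      set a : {S : Finset (Fin (m + 1)) // 0 ∉ S} → ℤ :=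
        fun S => B.repr v (insert 0 S.1) with ha
      set w : V := v - ∑ S : {S : Finset (Fin (m + 1)) // 0 ∉ S}, a S • SqZ (B S.1) with hw
      have hw0 : ∀ T, (0 : Fin (m+1)) ∈ T → B.repr w T = 0 := by
        intro T hT
        have hins : insert (0 : Fin (m+1)) (T.erase 0) = T := Finset.insert_erase hT
        have e : B.repr w T = B.repr v T -
            ∑ S : {S : Finset (Fin (m + 1)) // 0 ∉ S}, a S • B.repr (SqZ (B S.1)) T := by
          rw [hw, map_sub, map_sum]
          simp only [map_smul]
          rw [Finsupp.sub_apply]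
          congr 1
          rw [Finsupp.coe_finset_sum, Finset.sum_apply]
          apply Finset.sum_congr rfl
          intro S _
          rw [Finsupp.coe_smul, Pi.smul_apply]
        rw [e, Finset.sum_eq_single (⟨T.erase 0, Finset.notMem_erase _ _⟩ :
          {S : Finset (Fin (m + 1)) // 0 ∉ S})]
        · rw [hreprSqZ _ _ (Finset.notMem_erase _ _) hT, if_pos hins.symm, smul_eq_mul, mul_one,
            ha]
          simp only [hins]
          exact sub_self _
        · intro S _ hne
          rw [hreprSqZ _ _ S.2 hT, if_neg, smul_zero]
          intro he
          apply hne
          apply Subtype.ext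
          simp only []
          rw [he, Finset.erase_insert S.2]
        · intro h; exact absurd (Finset.mem_univ _) h
      have hφw : φ w = 0 := by
        rw [hw, map_sub, hφv, map_sum, zero_sub, neg_eq_zero]
        apply Finset.sum_eq_zero
        intro S _
        rw [map_smul, hφSqZ, smul_zero]
      have hdvd : ∀ U : Finset (Fin (m+1)), 0 ∉ U → (2 : ℤ) ∣ B.repr w U := by
        intro U₀ hU₀
        have hw_eq : φ w = ∑ U : Finset (Fin (m+1)), B.repr w U • Sq₂ (B₂ U) := by
          conv_lhs => rw [← Module.Basis.sum_repr B w]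
          rw [map_sum]
          apply Finset.sum_congr rfl
          intro U _
          rw [map_smul, hφB]
        have hc := congrArg (B₂.coord (insert 0 U₀)) (hw_eq ▸ hφw)
        rw [map_sum, map_zero] at hc
        have e : ∑ U : Finset (Fin (m+1)),
            (B₂.coord (insert 0 U₀)) (B.repr w U • Sq₂ (B₂ U)) =
            ((B.repr w U₀ : ℤ) : ZMod 2) := by
          rw [Finset.sum_eq_single U₀]
          · rw [map_zsmul, Module.Basis.coord_apply, hSq₂,
              key_repr B₂ U₀ (insert 0 U₀) hU₀ (Finset.mem_insert_self _ _), if_pos rfl,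
              zsmul_eq_mul, mul_one]
          · intro U _ hne
            by_cases hU : (0 : Fin (m+1)) ∈ U
            · rw [hw0 U hU, zero_smul, map_zero]
            · rw [map_zsmul, Module.Basis.coord_apply, hSq₂,
                key_repr B₂ U (insert 0 U₀) hU (Finset.mem_insert_self _ _), if_neg, smul_zero]
              intro he
              apply hne
              have := congrArg (fun t => Finset.erase t 0) he
              simpa [Finset.erase_insert hU, Finset.erase_insert hU₀] using this.symm
          · intro h; exact absurd (Finset.mem_univ _) h
        rw [e] at hc
        exact (ZMod.intCast_zmod_eq_zero_iff_dvd _ 2).1 hc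
      have hwmem : w ∈ Submodule.span ℤ (Set.range
          (Sum.elim (fun S : {S : Finset (Fin (m + 1)) // 0 ∉ S} => SqZ (B S.1))
            (fun S : {S : Finset (Fin (m + 1)) // 0 ∉ S} => (2 : ℤ) • B S.1))) := by
        rw [← Module.Basis.sum_repr B w]
        apply Submodule.sum_mem
        intro U _
        by_cases hU : (0 : Fin (m+1)) ∈ U
        · rw [hw0 U hU, zero_smul]
          exact Submodule.zero_mem _
        · obtain ⟨d, hd⟩ := hdvd U hU
          rw [hd, mul_comm, mul_smul]
          exact Submodule.smul_mem _ _
            (Submodule.subset_span ⟨Sum.inr ⟨U, hU⟩, rfl⟩)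
      have hveq : v = w + ∑ S : {S : Finset (Fin (m + 1)) // 0 ∉ S}, a S • SqZ (B S.1) := by
        rw [hw, sub_add_cancel]
      rw [hveq]
      apply Submodule.add_mem _ hwmem
      apply Submodule.sum_mem
      intro S _
      exact Submodule.smul_mem _ _ (Submodule.subset_span ⟨Sum.inl S, rfl⟩)
end

section
/- For 0 ≤ k ≤ n, the number of (k,n)-truncated untwisted checkerboard Young diagrams that are both irredundant and full equals C(⌊n/2⌋, ⌊k/2⌋) when k(n−k) is even, and 2·C((n−2)/2, (k−1)/2) when k(n−k) is odd. -/
def DsetP (m c : ℕ) (a : ℕ → ℕ) : Prop :=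
  (∀ i j : ℕ, i ≤ j → a j ≤ a i) ∧ a 0 ≤ c ∧ ∀ j, m ≤ j → a j = 0

def Teven (a : ℕ → ℕ) : ℕ → ℕ := fun i => 2 * a (i / 2)

def Sodd (k b : ℕ) (a : ℕ → ℕ) : ℕ → ℕ := fun i =>
  if i = 0 then b else if i < k then 2 * a ((i - 1) / 2) + 1 else 0

lemma gap_lemma {N m : ℕ} (e : Fin m → Fin N) (he : StrictMono e) :
    ∀ (p q : Fin m), (p : ℕ) ≤ (q : ℕ) → (e p : ℕ) + ((q : ℕ) - (p : ℕ)) ≤ (e q : ℕ) := by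
  intro p q hpq
  obtain ⟨d, hd⟩ := Nat.le.dest hpq
  induction d generalizing q with
  | zero =>
    have : p = q := Fin.ext (by omega)
    subst this; omega
  | succ d ih =>
    have hint : (p : ℕ) + d < m := by have := q.2; omega
    have h1 := ih ⟨(p : ℕ) + d, hint⟩ (by simp) (by simp)
    have h2 : e ⟨(p : ℕ) + d, hint⟩ < e q := he (by simp [Fin.lt_def]; omega)
    have h2' : (e ⟨(p : ℕ) + d, hint⟩ : ℕ) < (e q : ℕ) := h2
    simp at h1
    omega

/-- the strictly increasing enumeration associated to `a`. -/
def hmap (m c : ℕ) (a : {a : ℕ → ℕ // DsetP m c a}) (j : Fin m) : Fin (m + c) :=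
  ⟨a.1 (m - 1 - j) + (j : ℕ), by
    have h1 : a.1 (m - 1 - (j : ℕ)) ≤ c :=
      le_trans (a.2.1 0 _ (Nat.zero_le _)) a.2.2.1
    have := j.2; omega⟩

lemma hmap_mono (m c : ℕ) (a : {a : ℕ → ℕ // DsetP m c a}) : StrictMono (hmap m c a) := by
  intro j j' hjj'
  have hj : (j : ℕ) < (j' : ℕ) := hjj'
  have := j'.2
  have ha : a.1 (m - 1 - (j : ℕ)) ≤ a.1 (m - 1 - (j' : ℕ)) :=
    a.2.1 _ _ (by omega)
  show (hmap m c a j : ℕ) < (hmap m c a j' : ℕ)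
  simp only [hmap]
  omega

def Fmap (m c : ℕ) (a : {a : ℕ → ℕ // DsetP m c a}) :
    {s : Finset (Fin (m + c)) // s.card = m} :=
  ⟨Finset.image (hmap m c a) Finset.univ, by
    rw [Finset.card_image_of_injective _ (hmap_mono m c a).injective, Finset.card_univ,
      Fintype.card_fin]⟩

lemma hmap_eq_orderEmbOfFin (m c : ℕ) (a : {a : ℕ → ℕ // DsetP m c a})
    (s : Finset (Fin (m + c))) (hs : s.card = m) (hss : s = (Fmap m c a).1) :
    hmap m c a = ⇑(s.orderEmbOfFin hs) := by
  refine Finset.orderEmbOfFin_unique hs (fun x => ?_) (hmap_mono m c a)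
  rw [hss]
  exact Finset.mem_image_of_mem _ (Finset.mem_univ x)

lemma Fmap_injective (m c : ℕ) : Function.Injective (Fmap m c) := by
  intro a a' h
  have hs : (Fmap m c a).1 = (Fmap m c a').1 := congrArg Subtype.val h
  have h1 := hmap_eq_orderEmbOfFin m c a (Fmap m c a).1 (Fmap m c a).2 rfl
  have h2 := hmap_eq_orderEmbOfFin m c a' (Fmap m c a).1 (Fmap m c a).2 hs
  have heq : hmap m c a = hmap m c a' := by rw [h1, h2]
  apply Subtype.ext
  funext i
  by_cases hi : i < m
  · have := congrFun heq ⟨m - 1 - i, by omega⟩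
    have hv := congrArg Fin.val this
    simp only [hmap] at hv
    have : m - 1 - (m - 1 - i) = i := by omega
    rw [this] at hv
    omega
  · rw [a.2.2.2 i (Nat.not_lt.mp hi), a'.2.2.2 i (Nat.not_lt.mp hi)]

lemma Fmap_surjective (m c : ℕ) : Function.Surjective (Fmap m c) := by
  rintro ⟨s, hs⟩
  classical
  set e := s.orderEmbOfFin hs with he
  have hstrict : StrictMono e := (s.orderEmbOfFin hs).strictMono
  have hle : ∀ (t : Fin m), (t : ℕ) ≤ (e t : ℕ) := by
    intro t
    have := gap_lemma e hstrict ⟨0, lt_of_le_of_lt (Nat.zero_le _) t.2⟩ t (Nat.zero_le _)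
    simp at this; omega
  set aF : ℕ → ℕ := fun i => if h : i < m then (e ⟨m - 1 - i, by omega⟩ : ℕ) - (m - 1 - i)
    else 0 with haF
  have hD : DsetP m c aF := by
    refine ⟨?_, ?_, ?_⟩
    · intro i j hij
      by_cases hj : j < m
      · have hi : i < m := lt_of_le_of_lt hij hj
        simp only [haF, hi, hj, dif_pos]
        have hgap := gap_lemma e hstrict ⟨m - 1 - j, by omega⟩ ⟨m - 1 - i, by omega⟩
          (by simp; omega)
        have h1 := hle ⟨m - 1 - j, by omega⟩
        have h2 := hle ⟨m - 1 - i, by omega⟩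
        simp at hgap h1 h2
        omega
      · simp only [haF, hj, dif_neg]
        exact Nat.zero_le _
    · by_cases hm : 0 < m
      · simp only [haF, hm, dif_pos]
        have := (e ⟨m - 1 - 0, by omega⟩).2
        omega
      · simp only [haF, show ¬ (0 < m) from hm, dif_neg]
        exact Nat.zero_le _
    · intro j hj
      simp [haF, Nat.not_lt.mpr hj]
  refine ⟨⟨aF, hD⟩, ?_⟩
  apply Subtype.ext
  show Finset.image (hmap m c ⟨aF, hD⟩) Finset.univ = s
  apply Finset.eq_of_subset_of_card_le
  · intro x hx
    rw [Finset.mem_image] at hx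
    obtain ⟨j, _, rfl⟩ := hx
    have hj := j.2
    have hval : (hmap m c ⟨aF, hD⟩ j : ℕ) = (e ⟨m - 1 - (m - 1 - (j:ℕ)), by omega⟩ : ℕ) := by
      simp only [hmap, haF]
      have hlt : m - 1 - (j : ℕ) < m := by omega
      simp only [hlt, dif_pos]
      have h2 := hle ⟨m - 1 - (m - 1 - (j:ℕ)), by omega⟩
      simp at h2
      omega
    have : hmap m c ⟨aF, hD⟩ j = e ⟨m - 1 - (m - 1 - (j:ℕ)), by omega⟩ := Fin.ext hval
    rw [this, he]
    exact Finset.orderEmbOfFin_mem s hs _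
  · rw [hs, Finset.card_image_of_injective _ (hmap_mono m c _).injective,
      Finset.card_univ, Fintype.card_fin]

lemma card_Dset (m c : ℕ) : Nat.card {a : ℕ → ℕ // DsetP m c a} = (m + c).choose m := by
  rw [Nat.card_congr (Equiv.ofBijective _ ⟨Fmap_injective m c, Fmap_surjective m c⟩),
    Nat.card_eq_fintype_card, Fintype.card_finset_len, Fintype.card_fin]

section Struct

variable {k n : ℕ} {Λ : ℕ → ℕ}

lemma pair_even (hT : IsTruncated k n Λ) (hI : Irredundant Λ) (hF : FullT k n Λ)
    (h0 : Λ 0 % 2 = 0) : ∀ j, Λ (2*j) % 2 = 0 ∧ Λ (2*j+1) = Λ (2*j) := by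
  intro j
  induction j with
  | zero =>
    have h1 := hT.1.1 0 1 (by omega)
    have h2 : ¬(Λ 1 < Λ 0 ∧ (0 + Λ 0) % 2 = 0) := hI 0
    constructor
    · show Λ 0 % 2 = 0; exact h0
    · show Λ 1 = Λ 0; omega
  | succ j ih =>
    obtain ⟨he, hp⟩ := ih
    have e1 : 2*(j+1) = 2*j+2 := by ring
    rw [e1]
    have hmono21 := hT.1.1 (2*j+1) (2*j+2) (by omega)
    have hb1 := hT.2.2 (2*j+1)
    have heven : Λ (2*j+2) % 2 = 0 := by
      by_contra hodd
      by_cases hik : 2*j+2 < k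
      · apply hF (2*j+2)
        refine ⟨hik, by omega, Or.inr ?_, by omega⟩
        have hidx : 2*j+2-1 = 2*j+1 := by omega
        rw [hidx]
        omega
      · have := hT.2.1 (2*j+2) (by omega); omega
    have hpair : Λ (2*j+3) = Λ (2*j+2) := by
      have h2 : ¬(Λ (2*j+3) < Λ (2*j+2) ∧ (2*j+2 + Λ (2*j+2)) % 2 = 0) := hI (2*j+2)
      have h3 := hT.1.1 (2*j+2) (2*j+3) (by omega)
      omega
    exact ⟨heven, hpair⟩

lemma odd_chain (hT : IsTruncated k n Λ) (hI : Irredundant Λ) (hF : FullT k n Λ)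
    (h0 : Λ 0 % 2 = 1) :
    Λ 0 = n - k ∧ ∀ j, 2*j < k →
      Λ (2*j) % 2 = 1 ∧ (2*j+1 < k → Λ (2*j+1) % 2 = 1 ∧ Λ (2*j+2) = Λ (2*j+1)) := by
  have hk0 : 0 < k := by
    by_contra h
    have := hT.2.1 0 (by omega); omega
  have hb0 := hT.2.2 0
  have hΛ0b : Λ 0 = n - k := by
    by_contra hne
    exact hF 0 ⟨hk0, by omega, Or.inl rfl, by omega⟩
  refine ⟨hΛ0b, ?_⟩
  intro j
  induction j with
  | zero =>
    intro _
    refine ⟨h0, ?_⟩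
    intro h1k
    have hm01 := hT.1.1 0 1 (by omega)
    have hb1 := hT.2.2 1
    have hΛ1odd : Λ 1 % 2 = 1 := by
      by_contra hev
      apply hF 1
      refine ⟨h1k, by omega, Or.inr ?_, by omega⟩
      show Λ 1 < Λ 0
      omega
    have hpair : Λ 2 = Λ 1 := by
      have h2 : ¬(Λ 2 < Λ 1 ∧ (1 + Λ 1) % 2 = 0) := hI 1
      have h3 := hT.1.1 1 2 (by omega)
      omega
    exact ⟨hΛ1odd, hpair⟩
  | succ j ih =>
    intro h2j
    have e1 : 2*(j+1) = 2*j+2 := by ring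
    rw [e1] at h2j ⊢
    obtain ⟨hje, hinner⟩ := ih (by omega)
    obtain ⟨hodd1, hpair1⟩ := hinner (by omega)
    refine ⟨by omega, ?_⟩
    intro h3k
    have h3k' : 2*j+3 < k := by omega
    have hm := hT.1.1 (2*j+2) (2*j+3) (by omega)
    have hm0 := hT.1.1 0 (2*j+3) (by omega)
    have hb3 := hT.2.2 (2*j+3)
    have hΛodd : Λ (2*j+3) % 2 = 1 := by
      by_contra hev
      apply hF (2*j+3)
      refine ⟨h3k', by omega, Or.inr ?_, by omega⟩
      have hidx : 2*j+3-1 = 2*j+2 := by omega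
      rw [hidx]
      omega
    have hpair : Λ (2*j+4) = Λ (2*j+3) := by
      have h2 : ¬(Λ (2*j+4) < Λ (2*j+3) ∧ (2*j+3 + Λ (2*j+3)) % 2 = 0) := hI (2*j+3)
      have h3 := hT.1.1 (2*j+3) (2*j+4) (by omega)
      omega
    exact ⟨hΛodd, hpair⟩

lemma lam0_even (hT : IsTruncated k n Λ) (hI : Irredundant Λ) (hF : FullT k n Λ)
    (h2 : k % 2 = 0 ∨ (n - k) % 2 = 0) : Λ 0 % 2 = 0 := by
  by_contra h
  have h1 : Λ 0 % 2 = 1 := by omega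
  obtain ⟨hb, hchain⟩ := odd_chain hT hI hF h1
  have hk0 : 0 < k := by
    by_contra hh
    have := hT.2.1 0 (by omega); omega
  rcases h2 with hk | hbev
  · obtain ⟨_, hin⟩ := hchain (k/2 - 1) (by omega)
    obtain ⟨hoddk, hpk⟩ := hin (by omega)
    have h0k := hT.2.1 (2*(k/2-1)+2) (by omega)
    omega
  · omega

end Struct

lemma Teven_good {k n : ℕ} {a : ℕ → ℕ} (ha : DsetP (k/2) ((n-k)/2) a) :
    IsTruncated k n (Teven a) ∧ Irredundant (Teven a) ∧ FullT k n (Teven a) := by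
  obtain ⟨hmono, hbd, hsupp⟩ := ha
  have hbd' : ∀ j, a j ≤ (n-k)/2 := fun j => le_trans (hmono 0 j (Nat.zero_le _)) hbd
  refine ⟨⟨⟨?_, ⟨k, ?_⟩⟩, ?_, ?_⟩, ?_, ?_⟩
  · intro i j hij
    exact Nat.mul_le_mul_left 2 (hmono _ _ (Nat.div_le_div_right hij))
  · intro i hi
    show 2 * a (i / 2) = 0
    rw [hsupp (i/2) (by omega)]
  · intro i hi
    show 2 * a (i / 2) = 0
    rw [hsupp (i/2) (by omega)]
  · intro i
    show 2 * a (i / 2) ≤ n - k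
    have := hbd' (i/2)
    omega
  · intro i ⟨hlt, hpar⟩
    have hpar' : (i + 2 * a (i/2)) % 2 = 0 := hpar
    have hieven : i % 2 = 0 := by omega
    have hidx : (i+1)/2 = i/2 := by omega
    have hlt' : 2 * a ((i+1)/2) < 2 * a (i/2) := hlt
    rw [hidx] at hlt'
    omega
  · intro i ⟨hik, hlt, hor, hpar⟩
    have hpar' : (i + 2 * a (i/2)) % 2 = 1 := hpar
    have hiodd : i % 2 = 1 := by omega
    rcases hor with h | h
    · omega
    · have hidx : (i-1)/2 = i/2 := by omega
      have h' : 2 * a (i/2) < 2 * a ((i-1)/2) := h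
      rw [hidx] at h'
      omega

lemma Sodd_zero {k b : ℕ} {a : ℕ → ℕ} : Sodd k b a 0 = b := by simp [Sodd]

lemma Sodd_mid {k b : ℕ} {a : ℕ → ℕ} {i : ℕ} (h1 : 1 ≤ i) (h2 : i < k) :
    Sodd k b a i = 2 * a ((i - 1) / 2) + 1 := by
  unfold Sodd
  rw [if_neg (by omega), if_pos h2]

lemma Sodd_ge {k b : ℕ} {a : ℕ → ℕ} {i : ℕ} (h1 : 1 ≤ i) (h2 : k ≤ i) :
    Sodd k b a i = 0 := by
  unfold Sodd
  rw [if_neg (by omega), if_neg (by omega)]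

lemma Sodd_good {k n : ℕ} (hkn : k ≤ n) (hk : k % 2 = 1) (hb : (n - k) % 2 = 1)
    {a : ℕ → ℕ} (ha : DsetP ((k-1)/2) ((n-k-1)/2) a) :
    IsTruncated k n (Sodd k (n-k) a) ∧ Irredundant (Sodd k (n-k) a) ∧
      FullT k n (Sodd k (n-k) a) := by
  obtain ⟨hmono, hbd, hsupp⟩ := ha
  have hk1 : 1 ≤ k := by omega
  have hbd' : ∀ j, a j ≤ (n-k-1)/2 := fun j => le_trans (hmono 0 j (Nat.zero_le _)) hbd
  have hval : ∀ i, Sodd k (n-k) a i ≤ n - k := by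
    intro i
    by_cases h0 : i = 0
    · subst h0; rw [Sodd_zero]
    by_cases hik : i < k
    · rw [Sodd_mid (by omega) hik]
      have := hbd' ((i-1)/2)
      omega
    · rw [Sodd_ge (by omega) (by omega)]
      omega
  have hsucc : ∀ i, Sodd k (n-k) a (i+1) ≤ Sodd k (n-k) a i := by
    intro i
    by_cases h0 : i = 0
    · subst h0; rw [Sodd_zero]; exact hval 1
    by_cases hik : i < k
    · rw [Sodd_mid (by omega) hik]
      by_cases hik1 : i + 1 < k
      · rw [Sodd_mid (by omega) hik1]
        have := hmono ((i-1)/2) (i/2) (by omega)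
        have hidx : i + 1 - 1 = i := by omega
        rw [hidx]
        omega
      · rw [Sodd_ge (by omega) (by omega)]
        omega
    · rw [Sodd_ge (by omega) (by omega), Sodd_ge (by omega) (by omega)]
  have hmonoS : ∀ i j : ℕ, i ≤ j → Sodd k (n-k) a j ≤ Sodd k (n-k) a i :=
    fun i j hij => antitone_nat_of_succ_le hsucc hij
  refine ⟨⟨⟨hmonoS, ⟨k, fun i hi => Sodd_ge (by omega) hi⟩⟩,
      fun i hi => Sodd_ge (by omega) hi, hval⟩, ?_, ?_⟩
  · -- Irredundant
    intro i ⟨hlt, hpar⟩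
    by_cases h0 : i = 0
    · subst h0
      rw [Sodd_zero] at hpar
      omega
    by_cases hik : i < k
    · have hvi := Sodd_mid (k := k) (b := n-k) (a := a) (i := i) (by omega) hik
      have hiodd : i % 2 = 1 := by omega
      have hik1 : i + 1 < k := by omega
      have hvi1 := Sodd_mid (k := k) (b := n-k) (a := a) (i := i+1) (by omega) hik1
      have hidx : (i + 1 - 1) / 2 = (i-1)/2 := by omega
      rw [hidx] at hvi1
      omega
    · have hvi := Sodd_ge (k := k) (b := n-k) (a := a) (i := i) (by omega) (by omega)
      omega
  · -- Full
    intro i ⟨hik, hltb, hor, hpar⟩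
    by_cases h0 : i = 0
    · subst h0
      rw [Sodd_zero] at hltb
      omega
    · have hvi := Sodd_mid (k := k) (b := n-k) (a := a) (i := i) (by omega) hik
      have hieven : i % 2 = 0 := by omega
      have hi2 : 2 ≤ i := by omega
      rcases hor with h | h
      · omega
      · have hvi1 := Sodd_mid (k := k) (b := n-k) (a := a) (i := i-1) (by omega) (by omega)
        have hidx : (i - 1 - 1) / 2 = (i-1)/2 := by omega
        rw [hidx] at hvi1
        omega

lemma Dset_weaken {k n : ℕ} {a : ℕ → ℕ} (h : DsetP ((k-1)/2) ((n-k-1)/2) a) :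
    DsetP (k/2) ((n-k)/2) a :=
  ⟨h.1, by have := h.2.1; omega, fun j hj => h.2.2 j (by omega)⟩

lemma finite_Dset (m c : ℕ) : Finite {a : ℕ → ℕ // DsetP m c a} :=
  Finite.of_equiv _ (Equiv.ofBijective (Fmap m c)
    ⟨Fmap_injective m c, Fmap_surjective m c⟩).symm

lemma even_equiv (k n : ℕ) (hkn : k ≤ n) (h2 : k % 2 = 0 ∨ (n-k) % 2 = 0) :
    Nat.card {Λ : ℕ → ℕ // IsTruncated k n Λ ∧ Irredundant Λ ∧ FullT k n Λ} =
      Nat.card {a : ℕ → ℕ // DsetP (k/2) ((n-k)/2) a} := by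
  apply Nat.card_congr
  refine
    { toFun := fun Λp => ⟨fun j => Λp.1 (2*j) / 2, ?_⟩
      invFun := fun ap => ⟨Teven ap.1, Teven_good ap.2⟩
      left_inv := ?_
      right_inv := ?_ }
  · obtain ⟨Λ, hT, hI, hF⟩ := Λp
    refine ⟨fun i j hij => Nat.div_le_div_right (hT.1.1 _ _ (by omega)), ?_, ?_⟩
    · show Λ 0 / 2 ≤ (n-k)/2
      exact Nat.div_le_div_right (hT.2.2 0)
    · intro j hj
      have hp := (pair_even hT hI hF (lam0_even hT hI hF h2) j).2
      have h0 := hT.2.1 (2*j+1) (by omega)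
      show Λ (2*j) / 2 = 0
      omega
  · rintro ⟨Λ, hT, hI, hF⟩
    apply Subtype.ext
    funext i
    show 2 * (Λ (2*(i/2)) / 2) = Λ i
    obtain ⟨hev, hpq⟩ := pair_even hT hI hF (lam0_even hT hI hF h2) (i/2)
    by_cases hi2 : i % 2 = 0
    · have e : 2*(i/2) = i := by omega
      rw [e] at hev ⊢
      omega
    · have e : 2*(i/2)+1 = i := by omega
      rw [e] at hpq
      omega
  · rintro ⟨a, ha⟩
    apply Subtype.ext
    funext j
    show 2 * a (2*j/2) / 2 = a j
    have e : 2*j/2 = j := by omega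
    rw [e]
    omega

lemma odd_equiv (k n : ℕ) (hkn : k ≤ n) (hk : k % 2 = 1) (hb : (n-k) % 2 = 1) :
    Nat.card {Λ : ℕ → ℕ // IsTruncated k n Λ ∧ Irredundant Λ ∧ FullT k n Λ} =
      Nat.card ({a : ℕ → ℕ // DsetP ((k-1)/2) ((n-k-1)/2) a} ⊕
        {a : ℕ → ℕ // DsetP ((k-1)/2) ((n-k-1)/2) a}) := by
  apply Nat.card_congr
  refine
    { toFun := fun Λp => if h0 : Λp.1 0 % 2 = 0
        then Sum.inl ⟨fun j => Λp.1 (2*j) / 2, ?_⟩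
        else Sum.inr ⟨fun j => Λp.1 (2*j+1) / 2, ?_⟩
      invFun := Sum.elim (fun ap => ⟨Teven ap.1, Teven_good (Dset_weaken ap.2)⟩)
        (fun ap => ⟨Sodd k (n-k) ap.1, Sodd_good hkn hk hb ap.2⟩)
      left_inv := ?_
      right_inv := ?_ }
  · obtain ⟨Λ, hT, hI, hF⟩ := Λp
    refine ⟨fun i j hij => Nat.div_le_div_right (hT.1.1 _ _ (by omega)), ?_, ?_⟩
    · show Λ 0 / 2 ≤ (n-k-1)/2
      have := hT.2.2 0
      omega
    · intro j hj
      have hp := (pair_even hT hI hF h0 j).2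
      have hz := hT.2.1 (2*j+1) (by omega)
      show Λ (2*j) / 2 = 0
      omega
  · obtain ⟨Λ, hT, hI, hF⟩ := Λp
    refine ⟨fun i j hij => Nat.div_le_div_right (hT.1.1 (2*i+1) (2*j+1) (by omega)), ?_, ?_⟩
    · show Λ 1 / 2 ≤ (n-k-1)/2
      have := hT.2.2 1
      omega
    · intro j hj
      have hz := hT.2.1 (2*j+1) (by omega)
      show Λ (2*j+1) / 2 = 0
      omega
  · rintro ⟨Λ, hT, hI, hF⟩
    by_cases h0 : Λ 0 % 2 = 0
    · beta_reduce
      rw [dif_pos h0]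
      simp only [Sum.elim_inl]
      apply Subtype.ext
      funext i
      show 2 * (Λ (2*(i/2)) / 2) = Λ i
      obtain ⟨hev, hpq⟩ := pair_even hT hI hF h0 (i/2)
      by_cases hi2 : i % 2 = 0
      · have e : 2*(i/2) = i := by omega
        rw [e] at hev ⊢
        omega
      · have e : 2*(i/2)+1 = i := by omega
        rw [e] at hpq
        omega
    · beta_reduce
      rw [dif_neg h0]
      simp only [Sum.elim_inr]
      apply Subtype.ext
      funext i
      show Sodd k (n-k) (fun j => Λ (2*j+1) / 2) i = Λ i
      obtain ⟨hΛ0, hch⟩ := odd_chain hT hI hF (by omega)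
      by_cases hi0 : i = 0
      · subst hi0
        rw [Sodd_zero]
        exact hΛ0.symm
      by_cases hik : i < k
      · rw [Sodd_mid (by omega) hik]
        show 2 * (Λ (2*((i-1)/2)+1) / 2) + 1 = Λ i
        by_cases hpar : i % 2 = 1
        · obtain ⟨hodd, _⟩ := (hch ((i-1)/2) (by omega)).2 (by omega)
          have e : 2*((i-1)/2)+1 = i := by omega
          rw [e] at hodd ⊢
          omega
        · obtain ⟨hodd, hpq⟩ := (hch ((i-2)/2) (by omega)).2 (by omega)
          have e3 : (i-1)/2 = (i-2)/2 := by omega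
          have e2 : 2*((i-2)/2)+2 = i := by omega
          rw [e3]
          rw [e2] at hpq
          omega
      · rw [Sodd_ge (by omega) (by omega)]
        exact (hT.2.1 i (by omega)).symm
  · intro x
    rcases x with ap | ap
    · obtain ⟨a, ha⟩ := ap
      simp only [Sum.elim_inl]
      have hc : Teven a 0 % 2 = 0 := by
        show 2 * a (0/2) % 2 = 0
        omega
      refine (dif_pos hc).trans ?_
      apply congrArg
      apply Subtype.ext
      funext j
      show 2 * a (2*j/2) / 2 = a j
      have e : 2*j/2 = j := by omega
      rw [e]
      omega
    · obtain ⟨a, ha⟩ := ap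
      simp only [Sum.elim_inr]
      have hc : ¬ (Sodd k (n-k) a 0 % 2 = 0) := by
        rw [Sodd_zero]
        omega
      refine (dif_neg hc).trans ?_
      apply congrArg
      apply Subtype.ext
      funext j
      show Sodd k (n-k) a (2*j+1) / 2 = a j
      by_cases h : 2*j+1 < k
      · rw [Sodd_mid (by omega) h]
        show (2 * a ((2*j+1-1)/2) + 1) / 2 = a j
        have e : (2*j+1-1)/2 = j := by omega
        rw [e]
        omega
      · rw [Sodd_ge (by omega) (by omega)]
        exact (ha.2.2 j (by omega)).symm

/-- the number of `(k,n)`-truncated untwisted checkerboard Young diagrams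
that are both irredundant and full ("even" diagrams) equals `C(⌊n/2⌋, ⌊k/2⌋)` when
`k(n-k)` is even, and `2·C((n-2)/2, (k-1)/2)` when `k(n-k)` is odd. -/
theorem stmt17 (k n : ℕ) (hkn : k ≤ n) :
    Nat.card {Λ : ℕ → ℕ // IsTruncated k n Λ ∧ Irredundant Λ ∧ FullT k n Λ} =
      if k * (n - k) % 2 = 0 then Nat.choose (n / 2) (k / 2)
      else 2 * Nat.choose ((n - 2) / 2) ((k - 1) / 2) := by
  by_cases hpar : k * (n - k) % 2 = 0
  · rw [if_pos hpar]
    have h2 : k % 2 = 0 ∨ (n-k) % 2 = 0 := by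
      rcases Nat.mod_two_eq_zero_or_one k with h | h
      · exact Or.inl h
      rcases Nat.mod_two_eq_zero_or_one (n-k) with h' | h'
      · exact Or.inr h'
      · exfalso
        rw [Nat.mul_mod, h, h'] at hpar
        simp at hpar
    rw [even_equiv k n hkn h2, card_Dset]
    have e : k/2 + (n-k)/2 = n/2 := by rcases h2 with h | h <;> omega
    rw [e]
  · rw [if_neg hpar]
    have hk : k % 2 = 1 := by
      rcases Nat.mod_two_eq_zero_or_one k with h | h
      · exfalso; exact hpar (by rw [Nat.mul_mod, h]; simp)
      · exact h
    have hb : (n-k) % 2 = 1 := by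
      rcases Nat.mod_two_eq_zero_or_one (n-k) with h | h
      · exfalso; exact hpar (by rw [Nat.mul_mod, h]; simp)
      · exact h
    have : Finite {a : ℕ → ℕ // DsetP ((k-1)/2) ((n-k-1)/2) a} := finite_Dset _ _
    rw [odd_equiv k n hkn hk hb, Nat.card_sum, card_Dset]
    have e : (k-1)/2 + (n-k-1)/2 = (n-2)/2 := by omega
    rw [e]
    omega
end

section
/- Super Schur expansion bound: let f·g = h as before with deg-type data a (length k), b (length n−k), c (length n), and define Schur determinants a_Λ, b_Λ, c_Λ = det of the corresponding Jacobi–Trudi matrices with the usual vanishing conventions. Then for every partition Λ, b_Λ lies in the subgroup Σ_{S ≤ Λ, (S)_{k+1}=0} b_S·Z[c₁,…,cₙ] of the polynomial ring Z[a,b,c]/(relations from fg=h), i.e. b_Λ is a Z[c]-linear combination of b_S for subdiagrams S ≤ Λ whose (k+1)-st row is empty. -/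
/-- Extension of a coefficient sequence to integer indices by `0` for negative indices. -/
noncomputable def coefZ {R : Type*} [CommRing R] (b : ℕ → R) (m : ℤ) : R :=
  if 0 ≤ m then b m.toNat else 0

/-- The Jacobi–Trudi Schur determinant `b_Λ = det (b_{Λᵢ-i+j})_{1≤i,j≤l}`. -/
noncomputable def schurDet {R : Type*} [CommRing R] (b : ℕ → R) (l : ℕ)
    (Λ : Fin l → ℕ) : R :=
  Matrix.det (Matrix.of fun i j : Fin l => coefZ b ((Λ i : ℤ) - (i : ℤ) + (j : ℤ)))

namespace Stmt18Aux

variable {R : Type*} [CommRing R]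

lemma coefZ_neg (b : ℕ → R) {m : ℤ} (h : m < 0) : coefZ b m = 0 := if_neg (by omega)

lemma coefZ_nonneg (b : ℕ → R) {m : ℤ} (h : 0 ≤ m) : coefZ b m = b m.toNat := if_pos h

lemma coefZ_natCast (b : ℕ → R) (m : ℕ) : coefZ b (m : ℤ) = b m := by
  rw [coefZ_nonneg b (by positivity), Int.toNat_natCast]

/-- Lift a convolution identity to `coefZ` level. -/
lemma coefZ_conv (u v e : ℕ → R)
    (h : ∀ m : ℕ, u m = ∑ s ∈ Finset.range (m + 1), e s * v (m - s))
    (z : ℤ) (N : ℕ) (hz : z < N) :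
    coefZ u z = ∑ s ∈ Finset.range N, e s * coefZ v (z - s) := by
  rcases lt_or_ge z 0 with hneg | hpos
  · rw [coefZ_neg _ hneg]
    refine (Finset.sum_eq_zero fun s _ => ?_).symm
    rw [coefZ_neg _ (by omega), mul_zero]
  · set m := z.toNat with hm
    have hzm : (m : ℤ) = z := Int.toNat_of_nonneg hpos
    have hmN : m + 1 ≤ N := by omega
    have step1 : coefZ u z = ∑ s ∈ Finset.range (m + 1), e s * v (m - s) := by
      rw [coefZ_nonneg _ hpos]; exact h m
    have step2 : ∀ s ∈ Finset.range (m + 1), e s * v (m - s) = e s * coefZ v (z - s) := by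
      intro s hs
      simp only [Finset.mem_range] at hs
      rw [coefZ_nonneg _ (by omega)]
      congr 2
      omega
    have step3 : ∑ s ∈ Finset.range (m + 1), e s * coefZ v (z - s)
        = ∑ s ∈ Finset.range N, e s * coefZ v (z - s) := by
      refine Finset.sum_subset (Finset.range_subset_range.mpr hmN) ?_
      intro s _ hs
      simp only [Finset.mem_range] at hs
      rw [coefZ_neg _ (by omega), mul_zero]
    rw [step1, Finset.sum_congr rfl step2, step3]

/-- If all rows of a square matrix lie in the span of fewer vectors, the determinant
vanishes. -/
lemma det_eq_zero_of_rows_mem_span {l : ℕ} {ι : Type*} [Fintype ι]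
    (M : Matrix (Fin l) (Fin l) R) (v : ι → Fin l → R)
    (hcard : Fintype.card ι < l)
    (h : ∀ i, M i ∈ Submodule.span R (Set.range v)) : M.det = 0 := by
  classical
  choose C hC using fun i => (Submodule.mem_span_range_iff_exists_fun R).mp (h i)
  set D := (Matrix.detRowAlternating (R := R) (n := Fin l)).toMultilinearMap with hD
  have hdet : M.det = D (fun i => ∑ t : ι, C i t • v t) := by
    have : (fun i => ∑ t : ι, C i t • v t) = M := funext fun i => hC i
    rw [this]
    rfl
  rw [hdet, MultilinearMap.map_sum]
  refine Finset.sum_eq_zero fun r _ => ?_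
  have hsm : D (fun i => C i (r i) • v (r i)) = (∏ i, C i (r i)) • D (fun i => v (r i)) :=
    D.map_smul_univ (fun i => C i (r i)) (fun i => v (r i))
  rw [hsm]
  have hinj : ¬ Function.Injective fun i => v (r i) := by
    obtain ⟨i, j, hne, hij⟩ := Fintype.exists_ne_map_eq_of_card_lt r (by simpa using hcard)
    intro hinj
    exact hne (hinj (by simp only [hij]))
  have hz : D (fun i => v (r i)) = 0 :=
    AlternatingMap.map_eq_zero_of_not_injective _ _ hinj
  rw [hz, smul_zero]




lemma wrow_mem_span {l k : ℕ} (w a : ℕ → R)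
    (hrec : ∀ z : ℤ, 1 ≤ z → coefZ w z
      = ∑ i ∈ Finset.range k, (-(a (i + 1))) * coefZ w (z - 1 - i))
    (m : ℤ) (hm : 1 - (k : ℤ) ≤ m) :
    (fun j : Fin l => coefZ w (m + (j : ℤ))) ∈ Submodule.span R
      (Set.range fun t : Fin k => fun j : Fin l => coefZ w (-(t : ℤ) + (j : ℤ))) := by
  have key : ∀ n : ℕ, ∀ m : ℤ, 1 - (k : ℤ) ≤ m → m ≤ (n : ℤ) →
      (fun j : Fin l => coefZ w (m + (j : ℤ))) ∈ Submodule.span R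
        (Set.range fun t : Fin k => fun j : Fin l => coefZ w (-(t : ℤ) + (j : ℤ))) := by
    intro n
    induction n with
    | zero =>
      intro m hm hm0
      norm_num at hm0
      have hmk : (-m).toNat < k := by omega
      have htm : -((((-m).toNat : ℕ)) : ℤ) = m := by omega
      refine Submodule.subset_span ⟨⟨(-m).toNat, hmk⟩, ?_⟩
      funext j
      simp only [Fin.val_mk]
      rw [htm]
    | succ n IH =>
      intro m hm hmn
      rcases le_or_gt m (n : ℤ) with hle | hgt
      · exact IH m hm hle
      · have hm1 : 1 ≤ m := by omega
        have hrow : (fun j : Fin l => coefZ w (m + (j : ℤ)))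
            = ∑ i ∈ Finset.range k,
                (-(a (i + 1))) • (fun j : Fin l => coefZ w ((m - 1 - i) + (j : ℤ))) := by
          funext j
          rw [Finset.sum_apply]
          rw [show m + (j : ℤ) = (m + j) from rfl, hrec (m + j) (by omega)]
          refine Finset.sum_congr rfl fun i _ => ?_
          simp only [Pi.smul_apply, smul_eq_mul]
          congr 2
          ring
        rw [hrow]
        refine Submodule.sum_mem _ fun i hi => Submodule.smul_mem _ _ ?_
        simp only [Finset.mem_range] at hi
        exact IH (m - 1 - i) (by omega) (by omega)
  exact key m.toNat m hm (Int.self_le_toNat m)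

lemma det_vanish {l k : ℕ} (w a : ℕ → R) (hk : k < l)
    (hrec : ∀ z : ℤ, 1 ≤ z → coefZ w z
      = ∑ i ∈ Finset.range k, (-(a (i + 1))) * coefZ w (z - 1 - i))
    (η : Fin l → ℤ) (hlow : ∀ i : Fin l, (i : ℕ) ≤ k → 1 - (k : ℤ) ≤ η i) :
    (Matrix.of fun i j : Fin l => coefZ w (η i + (j : ℤ))).det = 0 := by
  classical
  set M := Matrix.of fun i j : Fin l => coefZ w (η i + (j : ℤ)) with hM
  set v : Fin k ⊕ Fin (l - 1 - k) → Fin l → R :=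
    Sum.elim (fun t : Fin k => fun j : Fin l => coefZ w (-(t : ℤ) + (j : ℤ)))
      (fun t : Fin (l - 1 - k) => M ⟨k + 1 + (t : ℕ), by have := t.isLt; omega⟩) with hv
  refine det_eq_zero_of_rows_mem_span M v ?_ ?_
  · simp only [Fintype.card_sum, Fintype.card_fin]
    omega
  · intro i
    rcases le_or_gt (i : ℕ) k with hik | hik
    · have hMi : M i = fun j : Fin l => coefZ w (η i + (j : ℤ)) := rfl
      rw [hMi]
      refine Submodule.span_mono ?_ (wrow_mem_span w a hrec (η i) (hlow i hik))
      rintro x ⟨t, rfl⟩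
      exact ⟨Sum.inl t, rfl⟩
    · have ht : k + 1 + ((i : ℕ) - k - 1) = (i : ℕ) := by omega
      refine Submodule.subset_span ⟨Sum.inr ⟨(i : ℕ) - k - 1, by have := i.isLt; omega⟩, ?_⟩
      show M _ = M i
      exact congrArg M (Fin.ext (by simp only [Fin.val_mk]; omega))


lemma strictAnti_gap {l : ℕ} (θ : Fin l → ℤ) (hθ : StrictAnti θ) :
    ∀ i j : Fin l, i ≤ j → θ j + ((j : ℕ) : ℤ) ≤ θ i + ((i : ℕ) : ℤ) := by
  have key : ∀ d : ℕ, ∀ i j : Fin l, (j : ℕ) = (i : ℕ) + d →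
      θ j + ((j : ℕ) : ℤ) ≤ θ i + ((i : ℕ) : ℤ) := by
    intro d
    induction d with
    | zero =>
      intro i j h
      have hij : i = j := Fin.ext (by omega)
      subst hij
      omega
    | succ d IH =>
      intro i j h
      have hjl := j.isLt
      have hj' : (i : ℕ) + d < l := by omega
      set j' : Fin l := ⟨(i : ℕ) + d, hj'⟩ with hj'def
      have h1 := IH i j' (by simp [hj'def])
      have h2 : θ j < θ j' := hθ (by rw [Fin.lt_def]; simp [hj'def]; omega)
      have h3 : ((j' : ℕ) : ℤ) = (i : ℕ) + d := by simp [hj'def]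
      omega
  intro i j hij
  exact key ((j : ℕ) - (i : ℕ)) i j (by have := Fin.le_def.mp hij; omega)

lemma det_sorted {l : ℕ} (v : ℕ → R) (Λ : Fin l → ℕ)
    (hΛ : ∀ i j : Fin l, i ≤ j → Λ j ≤ Λ i)
    (η : Fin l → ℤ) (hη : ∀ i, η i ≤ (Λ i : ℤ) - (i : ℕ)) :
    (Matrix.of fun i j : Fin l => coefZ v (η i + (j : ℤ))).det = 0 ∨
    ∃ S : Fin l → ℕ, (∀ i j : Fin l, i ≤ j → S j ≤ S i) ∧ (∀ i, S i ≤ Λ i) ∧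
      ∃ ε : ℤˣ, (Matrix.of fun i j : Fin l => coefZ v (η i + (j : ℤ))).det
        = (ε : ℤ) • (Matrix.of fun i j : Fin l =>
            coefZ v ((S i : ℤ) - (i : ℕ) + (j : ℤ))).det := by
  classical
  rcases Nat.eq_zero_or_pos l with hl0 | hl0
  · subst hl0
    refine Or.inr ⟨fun i => i.elim0, fun i => i.elim0, fun i => i.elim0, 1, ?_⟩
    rw [Matrix.det_fin_zero, Matrix.det_fin_zero]
    simp
  by_cases hinj : Function.Injective η
  swap
  · obtain ⟨i, j, hij, hne⟩ := Function.not_injective_iff.mp hinj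
    exact Or.inl (Matrix.det_zero_of_row_eq hne (funext fun j' => by
      show coefZ v (η i + (j' : ℤ)) = coefZ v (η j + (j' : ℤ))
      rw [hij]))
  · set σ₀ := Tuple.sort η with hσ₀
    have hmono : Monotone (η ∘ σ₀) := Tuple.monotone_sort η
    have hsm : StrictMono (η ∘ σ₀) :=
      hmono.strictMono_of_injective (hinj.comp σ₀.injective)
    set π : Equiv.Perm (Fin l) := (Fin.revPerm).trans σ₀ with hπ
    set θ : Fin l → ℤ := fun i => η (π i) with hθdef
    have hθanti : StrictAnti θ := by
      intro i j hij
      have : (Fin.rev j) < (Fin.rev i) := Fin.rev_lt_rev.mpr hij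
      exact hsm this
    set M := Matrix.of fun i j : Fin l => coefZ v (η i + (j : ℤ)) with hM
    set Mθ := Matrix.of fun i j : Fin l => coefZ v (θ i + (j : ℤ)) with hMθ
    have hsub : Mθ = M.submatrix π id := by
      ext i j
      rfl
    have hdet1 : Mθ.det = (Equiv.Perm.sign π : ℤ) * M.det := by
      rw [hsub]
      exact Matrix.det_permute π M
    have hdetM : M.det = (Equiv.Perm.sign π : ℤ) • Mθ.det := by
      have h2 : (Equiv.Perm.sign π : ℤ) • Mθ.det
          = (Equiv.Perm.sign π : ℤ) • ((Equiv.Perm.sign π : ℤ) * M.det) := by rw [hdet1]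
      rw [h2, zsmul_eq_mul, ← mul_assoc]
      have : ((Equiv.Perm.sign π : ℤ) : R) * ((Equiv.Perm.sign π : ℤ) : R) = 1 := by
        rw [← Int.cast_mul, ← Units.val_mul, Int.units_mul_self]
        simp
      rw [this, one_mul]
    have hbound : ∀ i : Fin l, θ i ≤ (Λ i : ℤ) - (i : ℕ) := by
      intro i
      obtain ⟨j, hij, hji⟩ : ∃ j : Fin l, i ≤ j ∧ θ i ≤ η j := by
        by_contra hcon
        push_neg at hcon
        have hmaps : ∀ i' : Fin l, i' ≤ i → π i' < i := by
          intro i' hi'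
          by_contra hge
          push_neg at hge
          have h1 := hcon (π i') hge
          have h2 : θ i ≤ θ i' := hθanti.antitone hi'
          have h3 : θ i' = η (π i') := rfl
          omega
        have hcard : (Finset.Iic i).card ≤ (Finset.Iio i).card := by
          refine Finset.card_le_card_of_injOn π
            (fun x hx => Finset.mem_Iio.mpr (hmaps x (Finset.mem_Iic.mp hx))) ?_
          exact Function.Injective.injOn π.injective
        rw [Fin.card_Iic, Fin.card_Iio] at hcard
        omega
      have h4 : (Λ j : ℤ) - (j : ℕ) ≤ (Λ i : ℤ) - (i : ℕ) := by
        have := hΛ i j hij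
        have := Fin.le_def.mp hij
        omega
      have := hη j
      omega
    set last : Fin l := ⟨l - 1, by omega⟩ with hlast
    by_cases hzero : θ last + ((l : ℤ) - 1) < 0
    · refine Or.inl ?_
      have : Mθ.det = 0 := by
        refine Matrix.det_eq_zero_of_row_eq_zero last fun j => ?_
        show coefZ v (θ last + (j : ℤ)) = 0
        refine coefZ_neg v ?_
        have := j.isLt
        omega
      rw [hdetM, this, smul_zero]
    · push_neg at hzero
      have hnonneg : ∀ i : Fin l, 0 ≤ θ i + (i : ℕ) := by
        intro i
        have h1 := strictAnti_gap θ hθanti i last (by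
          rw [Fin.le_def]
          simp [hlast]
          omega)
        have h2 : ((last : ℕ) : ℤ) = (l : ℤ) - 1 := by simp [hlast]; omega
        omega
      refine Or.inr ⟨fun i => (θ i + (i : ℕ)).toNat, ?_, ?_, Equiv.Perm.sign π, ?_⟩
      · intro i j hij
        show (θ j + ((j : ℕ) : ℤ)).toNat ≤ (θ i + ((i : ℕ) : ℤ)).toNat
        have := strictAnti_gap θ hθanti i j hij
        have h1 := hnonneg i
        have h2 := hnonneg j
        omega
      · intro i
        show (θ i + ((i : ℕ) : ℤ)).toNat ≤ Λ i
        have := hbound i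
        have := hnonneg i
        omega
      · rw [hdetM]
        congr 1
        refine congrArg Matrix.det (Matrix.ext fun i j => ?_)
        show coefZ v (θ i + (j : ℤ))
          = coefZ v ((((θ i + ((i : ℕ) : ℤ)).toNat : ℕ) : ℤ) - ((i : ℕ) : ℤ) + (j : ℤ))
        congr 1
        have := hnonneg i
        omega


lemma det_rows_expand {l : ℕ} (N : ℕ) (u v e : ℕ → R)
    (huv : ∀ m : ℕ, u m = ∑ s ∈ Finset.range (m + 1), e s * v (m - s))
    (η : Fin l → ℤ) (hη : ∀ i, η i + (l : ℤ) ≤ N) :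
    (Matrix.of fun i j : Fin l => coefZ u (η i + (j : ℤ))).det
      = ∑ f ∈ Fintype.piFinset (fun _ : Fin l => Finset.range N),
          (∏ i, e (f i)) * (Matrix.of fun i j : Fin l =>
            coefZ v (η i - f i + (j : ℤ))).det := by
  classical
  set D := (Matrix.detRowAlternating (R := R) (n := Fin l)).toMultilinearMap with hD
  have hrows : (Matrix.of fun i j : Fin l => coefZ u (η i + (j : ℤ))).det
      = D (fun i => ∑ s ∈ Finset.range N,
          (e s • fun j : Fin l => coefZ v (η i - s + (j : ℤ)))) := by
    have hfun : (fun i : Fin l => ∑ s ∈ Finset.range N,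
        (e s • fun j : Fin l => coefZ v (η i - s + (j : ℤ))))
        = fun (i j : Fin l) => coefZ u (η i + (j : ℤ)) := by
      funext i j
      rw [Finset.sum_apply]
      have hz : η i + (j : ℤ) < N := by
        have := j.isLt
        have := hη i
        omega
      rw [coefZ_conv u v e huv (η i + (j : ℤ)) N hz]
      refine Finset.sum_congr rfl fun s _ => ?_
      simp only [Pi.smul_apply, smul_eq_mul]
      congr 2
      ring
    rw [hfun]
    rfl
  rw [hrows, D.map_sum_finset]
  refine Finset.sum_congr rfl fun f _ => ?_
  have hsm := D.map_smul_univ (fun i => e (f i))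
    (fun i => fun j : Fin l => coefZ v (η i - f i + (j : ℤ)))
  rw [hsm, smul_eq_mul]
  rfl


lemma neg_one_pow_cancel {m : ℕ} {x y : R} (h : (-1 : R) ^ m * x = (-1 : R) ^ m * y) :
    x = y := by
  have h1 : ((-1 : R) ^ m) * ((-1 : R) ^ m) = 1 := by
    rw [← pow_add, ← two_mul, pow_mul]
    norm_num
  calc x = ((-1 : R) ^ m * (-1 : R) ^ m) * x := by rw [h1, one_mul]
    _ = (-1 : R) ^ m * ((-1 : R) ^ m * x) := by ring
    _ = (-1 : R) ^ m * ((-1 : R) ^ m * y) := by rw [h]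
    _ = ((-1 : R) ^ m * (-1 : R) ^ m) * y := by ring
    _ = y := by rw [h1, one_mul]

lemma coeff_signed_mul (p q : ℕ → R) (n : ℕ) :
    (PowerSeries.coeff n) ((PowerSeries.mk fun i => (-1 : R) ^ i * p i) *
      (PowerSeries.mk fun i => (-1 : R) ^ i * q i))
    = (-1 : R) ^ n * ∑ s ∈ Finset.range (n + 1), p s * q (n - s) := by
  rw [PowerSeries.coeff_mul, Finset.Nat.sum_antidiagonal_eq_sum_range_succ_mk,
    Finset.mul_sum]
  refine Finset.sum_congr rfl fun s hs => ?_
  simp only [Finset.mem_range] at hs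
  rw [PowerSeries.coeff_mk, PowerSeries.coeff_mk]
  have : (-1 : R) ^ s * (-1 : R) ^ (n - s) = (-1 : R) ^ n := by
    rw [← pow_add]
    congr 1
    omega
  calc (-1 : R) ^ s * p s * ((-1 : R) ^ (n - s) * q (n - s))
      = ((-1 : R) ^ s * (-1 : R) ^ (n - s)) * (p s * q (n - s)) := by ring
    _ = (-1 : R) ^ n * (p s * q (n - s)) := by rw [this]

/-- Coefficient-level convolution from a signed power series identity. -/
lemma conv_of_mul_eq (p q r : ℕ → R)
    (h : (PowerSeries.mk fun i => (-1 : R) ^ i * p i) *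
      (PowerSeries.mk fun i => (-1 : R) ^ i * q i) =
      PowerSeries.mk fun i => (-1 : R) ^ i * r i) (m : ℕ) :
    r m = ∑ s ∈ Finset.range (m + 1), p s * q (m - s) := by
  have := congrArg (PowerSeries.coeff m) h
  rw [coeff_signed_mul, PowerSeries.coeff_mk] at this
  exact (neg_one_pow_cancel this.symm)

/-- Coefficient-level statement of being inverse power series. -/
lemma conv_of_mul_eq_one (p q : ℕ → R)
    (h : (PowerSeries.mk fun i => (-1 : R) ^ i * p i) *
      (PowerSeries.mk fun i => (-1 : R) ^ i * q i) = 1) (m : ℕ) :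
    ∑ s ∈ Finset.range (m + 1), p s * q (m - s) = if m = 0 then 1 else 0 := by
  have := congrArg (PowerSeries.coeff m) h
  rw [coeff_signed_mul, PowerSeries.coeff_one] at this
  refine neg_one_pow_cancel (m := m) ?_
  rw [this]
  by_cases hm : m = 0
  · subst hm; norm_num
  · simp [hm]

lemma exists_wD (a b c : ℕ → R) (ha0 : a 0 = 1) (hc0 : c 0 = 1)
    (hfgh : (PowerSeries.mk fun i => (-1 : R) ^ i * a i) *
        (PowerSeries.mk fun i => (-1 : R) ^ i * b i) =
        PowerSeries.mk fun i => (-1 : R) ^ i * c i) :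
    ∃ w D : ℕ → R,
      (∀ m, b m = ∑ s ∈ Finset.range (m + 1), c s * w (m - s)) ∧
      (∀ m, w m = ∑ s ∈ Finset.range (m + 1), D s * b (m - s)) ∧
      (∀ m, D m ∈ Subring.closure (Set.range c)) ∧
      (∀ m : ℕ, ∑ s ∈ Finset.range (m + 1), a s * w (m - s) = if m = 0 then 1 else 0) := by
  classical
  set F := PowerSeries.mk fun i => (-1 : R) ^ i * a i with hF
  set G := PowerSeries.mk fun i => (-1 : R) ^ i * b i with hG
  set H := PowerSeries.mk fun i => (-1 : R) ^ i * c i with hH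
  have hFc : PowerSeries.constantCoeff F = (1 : Rˣ) := by
    simp [hF, PowerSeries.constantCoeff_mk, ha0]
  have hHc : PowerSeries.constantCoeff H = (1 : Rˣ) := by
    simp [hH, PowerSeries.constantCoeff_mk, hc0]
  set W := F.invOfUnit 1 with hWdef
  set K := H.invOfUnit 1 with hKdef
  have hFW : F * W = 1 := PowerSeries.mul_invOfUnit F 1 hFc
  have hHK : H * K = 1 := PowerSeries.mul_invOfUnit H 1 hHc
  set w : ℕ → R := fun m => (-1 : R) ^ m * PowerSeries.coeff m W with hw
  set D : ℕ → R := fun m => (-1 : R) ^ m * PowerSeries.coeff m K with hD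
  have hWmk : W = PowerSeries.mk fun i => (-1 : R) ^ i * w i := by
    ext n
    rw [PowerSeries.coeff_mk, hw]
    have h1 : ((-1 : R) ^ n) * ((-1 : R) ^ n) = 1 := by
      rw [← pow_add, ← two_mul, pow_mul]; norm_num
    calc PowerSeries.coeff n W = ((-1:R)^n * (-1:R)^n) * PowerSeries.coeff n W := by
          rw [h1, one_mul]
      _ = (-1:R)^n * ((-1:R)^n * PowerSeries.coeff n W) := by ring
  have hKmk : K = PowerSeries.mk fun i => (-1 : R) ^ i * D i := by
    ext n
    rw [PowerSeries.coeff_mk, hD]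
    have h1 : ((-1 : R) ^ n) * ((-1 : R) ^ n) = 1 := by
      rw [← pow_add, ← two_mul, pow_mul]; norm_num
    calc PowerSeries.coeff n K = ((-1:R)^n * (-1:R)^n) * PowerSeries.coeff n K := by
          rw [h1, one_mul]
      _ = (-1:R)^n * ((-1:R)^n * PowerSeries.coeff n K) := by ring
  refine ⟨w, D, ?_, ?_, ?_, ?_⟩
  · -- b m = ∑ c s * w (m-s), from G = H * W
    have hGHW : H * W = G := by
      calc H * W = (F * G) * W := by rw [hfgh]
        _ = (F * W) * G := by ring
        _ = G := by rw [hFW, one_mul]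
    intro m
    exact conv_of_mul_eq c w b (by rw [← hH, ← hWmk, ← hG]; exact hGHW) m
  · -- w m = ∑ D s * b (m-s), from W = K * G
    have hKGW : K * G = W := by
      calc K * G = K * (H * W) := by
            rw [show H * W = G from by
              calc H * W = (F * G) * W := by rw [hfgh]
                _ = (F * W) * G := by ring
                _ = G := by rw [hFW, one_mul]]
        _ = (H * K) * W := by ring
        _ = W := by rw [hHK, one_mul]
    intro m
    exact conv_of_mul_eq D b w (by rw [← hKmk, ← hG, ← hWmk]; exact hKGW) m
  · -- D m ∈ closure
    have hcD : ∀ m : ℕ, ∑ s ∈ Finset.range (m + 1), c s * D (m - s)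
        = if m = 0 then 1 else 0 := by
      intro m
      exact conv_of_mul_eq_one c D (by rw [← hH, ← hKmk]; exact hHK) m
    intro m
    induction m using Nat.strong_induction_on with
    | _ m IH =>
      rcases Nat.eq_zero_or_pos m with hm | hm
      · subst hm
        have h0 := hcD 0
        simp [hc0] at h0
        rw [h0]
        exact Subring.one_mem _
      · obtain ⟨m', rfl⟩ : ∃ m', m = m' + 1 := ⟨m - 1, by omega⟩
        have h := hcD (m' + 1)
        rw [Finset.sum_range_succ'] at h
        simp only [Nat.sub_zero, hc0, one_mul, if_neg (Nat.succ_ne_zero m')] at h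
        have hDval : D (m' + 1)
            = -∑ i ∈ Finset.range (m' + 1), c (i + 1) * D (m' + 1 - (i + 1)) := by
          linear_combination h
        rw [hDval]
        refine Subring.neg_mem _ (Subring.sum_mem _ fun i hi => ?_)
        refine Subring.mul_mem _ (Subring.subset_closure ⟨i + 1, rfl⟩) ?_
        simp only [Finset.mem_range] at hi
        exact IH (m' + 1 - (i + 1)) (by omega)
  · -- ∑ a s * w (m-s) = δ
    intro m
    exact conv_of_mul_eq_one a w (by rw [← hF, ← hWmk]; exact hFW) m


end Stmt18Aux

/-- with `f·g = h` (coefficient data `a` of length `k`, `b` of length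
`n-k`, `c` of length `n`, with the usual vanishing conventions), for every partition
`Λ`, the Schur determinant `b_Λ` is a `ℤ[c₁,…,cₙ]`-linear combination of the `b_S` for
partitions `S ≤ Λ` whose `(k+1)`-st row is empty. -/
theorem stmt18 {R : Type*} [CommRing R] (k n : ℕ) (hkn : k ≤ n)
    (a b c : ℕ → R)
    (ha0 : a 0 = 1) (hb0 : b 0 = 1) (hc0 : c 0 = 1)
    (ha : ∀ i, k < i → a i = 0) (hb : ∀ i, n - k < i → b i = 0) (hc : ∀ i, n < i → c i = 0)
    (hfgh : (PowerSeries.mk fun i => (-1 : R) ^ i * a i) *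
        (PowerSeries.mk fun i => (-1 : R) ^ i * b i) =
        PowerSeries.mk fun i => (-1 : R) ^ i * c i)
    (l : ℕ) (Λ : Fin l → ℕ) (hΛ : ∀ i j : Fin l, i ≤ j → Λ j ≤ Λ i) :
    schurDet b l Λ ∈ Submodule.span ℤ
      {x : R | ∃ S : Fin l → ℕ,
        (∀ i j : Fin l, i ≤ j → S j ≤ S i) ∧ (∀ i, S i ≤ Λ i) ∧
        (∀ i : Fin l, k ≤ (i : ℕ) → S i = 0) ∧
        ∃ r ∈ Subring.closure (Set.range c), x = schurDet b l S * r} := by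
  classical
  rcases Nat.eq_zero_or_pos l with hl0 | hl0
  · subst hl0
    exact Submodule.subset_span ⟨Λ, hΛ, fun i => le_rfl, fun i => i.elim0, 1,
      Subring.one_mem _, (mul_one _).symm⟩
  obtain ⟨w, D, hbw, hwD, hDc, haw⟩ := Stmt18Aux.exists_wD a b c ha0 hc0 hfgh
  -- the order-`k` linear recursion for `w`
  have hrecZ : ∀ z : ℤ, 1 ≤ z → coefZ w z
      = ∑ i ∈ Finset.range k, (-(a (i + 1))) * coefZ w (z - 1 - i) := by
    intro z hz
    set m := z.toNat with hmdef
    have hm1 : 1 ≤ m := by omega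
    have hzm : (m : ℤ) = z := by omega
    have h := haw m
    rw [if_neg (by omega), Finset.sum_range_succ'] at h
    rw [ha0, one_mul, Nat.sub_zero] at h
    -- h : ∑ i ∈ range m, a (i+1) * w (m - (i+1)) + w m = 0
    have e1 : coefZ w z = w m := by
      rw [Stmt18Aux.coefZ_nonneg w (by omega)]
    set K0 := max k m with hK0
    have e2 : ∑ i ∈ Finset.range k, (-(a (i + 1))) * coefZ w (z - 1 - i)
        = ∑ i ∈ Finset.range K0, (-(a (i + 1))) * coefZ w (z - 1 - i) := by
      refine Finset.sum_subset (Finset.range_subset_range.mpr (by omega)) ?_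
      intro i _ hik
      simp only [Finset.mem_range] at hik
      rw [ha (i + 1) (by omega), neg_zero, zero_mul]
    have e3 : ∑ i ∈ Finset.range K0, (-(a (i + 1))) * coefZ w (z - 1 - i)
        = ∑ i ∈ Finset.range m, (-(a (i + 1))) * coefZ w (z - 1 - i) := by
      refine (Finset.sum_subset (Finset.range_subset_range.mpr (by omega)) ?_).symm
      intro i _ him
      simp only [Finset.mem_range] at him
      rw [Stmt18Aux.coefZ_neg w (by omega), mul_zero]
    have e4 : ∑ i ∈ Finset.range m, (-(a (i + 1))) * coefZ w (z - 1 - i)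
        = ∑ i ∈ Finset.range m, (-(a (i + 1))) * w (m - (i + 1)) := by
      refine Finset.sum_congr rfl fun i hi => ?_
      simp only [Finset.mem_range] at hi
      rw [Stmt18Aux.coefZ_nonneg w (by omega)]
      congr 2
      omega
    rw [e1, e2, e3, e4]
    have : ∑ i ∈ Finset.range m, (-(a (i + 1))) * w (m - (i + 1))
        = -∑ i ∈ Finset.range m, a (i + 1) * w (m - (i + 1)) := by
      rw [← Finset.sum_neg_distrib]
      exact Finset.sum_congr rfl fun i _ => by ring
    rw [this]
    linear_combination h
  -- setup for the double expansion
  set i₀l : Fin l := ⟨0, hl0⟩ with hi₀l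
  set N := Λ i₀l + l with hN
  have hΛ0 : ∀ i : Fin l, Λ i ≤ Λ i₀l := fun i => hΛ i₀l i (by
    rw [Fin.le_def]; exact Nat.zero_le _)
  set ν : Fin l → ℤ := fun i => (Λ i : ℤ) - ((i : ℕ) : ℤ) with hν
  have hνbound : ∀ i : Fin l, ν i + (l : ℤ) ≤ N := by
    intro i
    have := hΛ0 i
    simp only [hν, hN]
    push_cast
    omega
  have hgoal : schurDet b l Λ
      = ∑ f ∈ Fintype.piFinset (fun _ : Fin l => Finset.range N),
          (∏ i, c (f i)) * (Matrix.of fun i j : Fin l =>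
            coefZ w (ν i - f i + (j : ℤ))).det :=
    Stmt18Aux.det_rows_expand N b w c hbw ν hνbound
  rw [hgoal]
  refine Submodule.sum_mem _ fun f _ => ?_
  -- sort the parameters ν i - f i
  rcases Stmt18Aux.det_sorted w Λ hΛ (fun i => ν i - f i) (fun i => by
      simp only [hν]; omega) with h0 | ⟨S, hSa, hSΛ, ε, hdet⟩
  · rw [h0, mul_zero]
    exact Submodule.zero_mem _
  rw [hdet]
  by_cases hbad : ∃ i : Fin l, k ≤ (i : ℕ) ∧ S i ≠ 0
  · -- more than k rows: the w-determinant vanishes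
    obtain ⟨i₀, hi₀k, hi₀⟩ := hbad
    have hkl : k < l := lt_of_le_of_lt hi₀k i₀.isLt
    have hvan : (Matrix.of fun i j : Fin l =>
        coefZ w ((S i : ℤ) - ((i : ℕ) : ℤ) + (j : ℤ))).det = 0 := by
      refine Stmt18Aux.det_vanish w a hkl hrecZ (fun i => (S i : ℤ) - ((i : ℕ) : ℤ)) ?_
      intro i hik
      have hii₀ : i ≤ i₀ := Fin.le_def.mpr (le_trans hik hi₀k)
      have hS1 : 1 ≤ S i := le_trans (by omega) (hSa i i₀ hii₀)
      show (1 : ℤ) - (k : ℤ) ≤ (S i : ℤ) - ((i : ℕ) : ℤ)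
      omega
    rw [hvan, smul_zero, mul_zero]
    exact Submodule.zero_mem _
  · push_neg at hbad
    -- S has at most k rows; expand the w-determinant back into b-determinants
    have hexp2 : (Matrix.of fun i j : Fin l =>
        coefZ w ((S i : ℤ) - ((i : ℕ) : ℤ) + (j : ℤ))).det
        = ∑ g ∈ Fintype.piFinset (fun _ : Fin l => Finset.range N),
            (∏ i, D (g i)) * (Matrix.of fun i j : Fin l =>
              coefZ b ((S i : ℤ) - ((i : ℕ) : ℤ) - g i + (j : ℤ))).det := by
      refine Stmt18Aux.det_rows_expand N w b D hwD (fun i => (S i : ℤ) - ((i : ℕ) : ℤ)) ?_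
      intro i
      have h1 := le_trans (hSΛ i) (hΛ0 i)
      simp only [hN]
      push_cast
      omega
    rw [hexp2, Finset.smul_sum, Finset.mul_sum]
    refine Submodule.sum_mem _ fun g _ => ?_
    rcases Stmt18Aux.det_sorted b S hSa (fun i => (S i : ℤ) - ((i : ℕ) : ℤ) - g i) (fun i => by
        show (S i : ℤ) - ((i : ℕ) : ℤ) - (g i : ℤ) ≤ (S i : ℤ) - ((i : ℕ) : ℤ)
        omega)
      with h0' | ⟨S', hS'a, hS'S, ε', hdet'⟩
    · rw [h0', mul_zero, smul_zero, mul_zero]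
      exact Submodule.zero_mem _
    · rw [hdet']
      refine Submodule.subset_span ?_
      refine ⟨S', hS'a, fun i => le_trans (hS'S i) (hSΛ i),
        fun i hik => Nat.le_zero.mp (le_trans (hS'S i) (le_of_eq (hbad i hik))), ?_⟩
      have hcast : ∀ u : ℤˣ, ((u : ℤ) : R) ∈ Subring.closure (Set.range c) := by
        intro u
        rcases Int.units_eq_one_or u with h | h <;> rw [h]
        · simp only [Units.val_one, Int.cast_one]
          exact Subring.one_mem _
        · simp only [Units.val_neg, Units.val_one, Int.cast_neg, Int.cast_one]
          exact Subring.neg_mem _ (Subring.one_mem _)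
      refine ⟨((ε : ℤ) : R) * ((ε' : ℤ) : R) * (∏ i, c (f i)) * (∏ i, D (g i)),
        Subring.mul_mem _ (Subring.mul_mem _ (Subring.mul_mem _ (hcast ε) (hcast ε'))
          (Subring.prod_mem _ fun i _ => Subring.subset_closure ⟨f i, rfl⟩))
          (Subring.prod_mem _ fun i _ => hDc (g i)), ?_⟩
      have hschur : schurDet b l S' = (Matrix.of fun i j : Fin l =>
          coefZ b ((S' i : ℤ) - ((i : ℕ) : ℤ) + (j : ℤ))).det := rfl
      rw [hschur, zsmul_eq_mul, zsmul_eq_mul]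
      ring
end
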